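/- arXiv:2403.19526 — 4 statements merged into one kernel-verified Lean document; each statement's English description precedes it below -/
import Mathlib

section
/- Every interval ipomset with interfaces has a unique sparse step decomposition, i.e. a unique presentation P = P₁ * ⋯ * Pₙ as a gluing of starters and terminators in which starters and terminators alternate along the sequence. -/
set_option autoImplicit false

/-! ## Ipomsets (pomsets with interfaces) over an alphabet Λ, with events drawn from ℕ -/

structure Ipomset (Λ : Type) : Type where
  E : Finset ℕ
  lt : ℕ → ℕ → Prop
  evord : ℕ → ℕ → Prop
  S : Finset ℕ
  T : Finset ℕ
  lab : ℕ → Λ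
  S_sub : S ⊆ E
  T_sub : T ⊆ E
  lt_dom : ∀ a b, lt a b → a ∈ E ∧ b ∈ E
  evord_dom : ∀ a b, evord a b → a ∈ E ∧ b ∈ E
  lt_irrefl : ∀ e, ¬ lt e e
  lt_trans : ∀ a b c, lt a b → lt b c → lt a c
  evord_irrefl : ∀ e, ¬ evord e e
  evord_asymm : ∀ a b, evord a b → ¬ evord b a
  lt_evord : ∀ a b, lt a b → ¬ evord a b ∧ ¬ evord b a
  total : ∀ e ∈ E, ∀ e' ∈ E, e ≠ e' → lt e e' ∨ lt e' e ∨ evord e e' ∨ evord e' e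
  S_min : ∀ e ∈ S, ∀ e', ¬ lt e' e
  T_max : ∀ e ∈ T, ∀ e', ¬ lt e e'

namespace Ipomset

variable {Λ : Type}

/-- An ipomset is interval if its precedence order admits an interval representation. -/
def Interval (P : Ipomset Λ) : Prop :=
  ∃ f g : ℕ → ℝ, (∀ e ∈ P.E, f e ≤ g e) ∧
    (∀ e₁ ∈ P.E, ∀ e₂ ∈ P.E, (P.lt e₁ e₂ ↔ g e₁ < f e₂))

/-- Discrete: empty precedence order. -/
def Discrete (P : Ipomset Λ) : Prop := ∀ a b, ¬ P.lt a b

/-- A starter is a discrete ipomset all of whose events are targets. -/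
def IsStarter (P : Ipomset Λ) : Prop := P.Discrete ∧ P.T = P.E

/-- A terminator is a discrete ipomset all of whose events are sources. -/
def IsTerminator (P : Ipomset Λ) : Prop := P.Discrete ∧ P.S = P.E

/-- An identity is both a starter and a terminator. -/
def IsId (P : Ipomset Λ) : Prop := P.IsStarter ∧ P.IsTerminator

/-- The width of an ipomset: the cardinality of a largest `<`-antichain. -/
noncomputable def width (P : Ipomset Λ) : ℕ :=
  sSup {n | ∃ A : Finset ℕ, A ⊆ P.E ∧ (∀ a ∈ A, ∀ b ∈ A, ¬ P.lt a b) ∧ A.card = n}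

/-- `P.Subsumes Q` means `P ⊑ Q` : `Q` subsumes `P`. -/
def Subsumes (P Q : Ipomset Λ) : Prop :=
  ∃ f : ℕ → ℕ, Set.BijOn f ↑P.E ↑Q.E ∧
    (∀ e ∈ P.E, (e ∈ P.S ↔ f e ∈ Q.S)) ∧
    (∀ e ∈ P.E, (e ∈ P.T ↔ f e ∈ Q.T)) ∧
    (∀ e ∈ P.E, Q.lab (f e) = P.lab e) ∧
    (∀ e₁ ∈ P.E, ∀ e₂ ∈ P.E, Q.lt (f e₁) (f e₂) → P.lt e₁ e₂) ∧
    (∀ e₁ ∈ P.E, ∀ e₂ ∈ P.E, P.evord e₁ e₂ → Q.evord (f e₁) (f e₂))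

/-- `f` is an isomorphism of ipomsets from `P` to `Q`. -/
def IsIso (P Q : Ipomset Λ) (f : ℕ → ℕ) : Prop :=
  Set.BijOn f ↑P.E ↑Q.E ∧
    (∀ e ∈ P.E, (e ∈ P.S ↔ f e ∈ Q.S)) ∧
    (∀ e ∈ P.E, (e ∈ P.T ↔ f e ∈ Q.T)) ∧
    (∀ e ∈ P.E, Q.lab (f e) = P.lab e) ∧
    (∀ e₁ ∈ P.E, ∀ e₂ ∈ P.E, (P.lt e₁ e₂ ↔ Q.lt (f e₁) (f e₂))) ∧
    (∀ e₁ ∈ P.E, ∀ e₂ ∈ P.E, (P.evord e₁ e₂ ↔ Q.evord (f e₁) (f e₂)))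

def Isomorphic (P Q : Ipomset Λ) : Prop := ∃ f, IsIso P Q f

end Ipomset

/-- Subsumption closure of a set of ipomsets. -/
def downc {Λ : Type} (L : Set (Ipomset Λ)) : Set (Ipomset Λ) :=
  {P | ∃ Q ∈ L, P.Subsumes Q}

/-! ## Gluing composition -/

/-- The base relation whose transitive closure is the precedence of a gluing `P * Q`. -/
def glueBase {Λ : Type} (P Q : Ipomset Λ) : ℕ → ℕ → Prop := fun a b =>
  P.lt a b ∨ Q.lt a b ∨ (a ∈ P.E ∧ a ∉ P.T ∧ b ∈ Q.E ∧ b ∉ Q.S)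

/-- `IsGluing P Q R` : the gluing `P * Q` is defined and equals `R`
(events of the target interface of `P` are literally identified with those of the
source interface of `Q`). -/
structure IsGluing {Λ : Type} (P Q R : Ipomset Λ) : Prop where
  match_TS : P.T = Q.S
  inter : ∀ e, e ∈ P.E → e ∈ Q.E → e ∈ P.T
  evord_agree : ∀ a ∈ P.T, ∀ b ∈ P.T, (P.evord a b ↔ Q.evord a b)
  lab_agree : ∀ e ∈ P.T, P.lab e = Q.lab e
  E_eq : R.E = P.E ∪ Q.E
  S_eq : R.S = P.S
  T_eq : R.T = Q.T
  lab_P : ∀ e ∈ P.E, R.lab e = P.lab e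
  lab_Q : ∀ e ∈ Q.E, R.lab e = Q.lab e
  evord_eq : ∀ a b, (R.evord a b ↔ P.evord a b ∨ Q.evord a b)
  lt_eq : ∀ a b, (R.lt a b ↔ Relation.TransGen (glueBase P Q) a b)

/-- `IsGluingList [P₁, …, Pₙ] P` : the iterated gluing `P₁ * ⋯ * Pₙ` is defined and equals `P`. -/
inductive IsGluingList {Λ : Type} : List (Ipomset Λ) → Ipomset Λ → Prop
  | single (P : Ipomset Λ) : IsGluingList [P] P
  | cons {P Q R : Ipomset Λ} {l : List (Ipomset Λ)} :
      IsGluingList l Q → IsGluing P Q R → IsGluingList (P :: l) R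

/-! ## Step decompositions -/

/-- A step decomposition of `P`: a presentation of `P` as a gluing of starters and
terminators. -/
def IsStepDecomp {Λ : Type} (l : List (Ipomset Λ)) (P : Ipomset Λ) : Prop :=
  l ≠ [] ∧ (∀ Q ∈ l, Q.IsStarter ∨ Q.IsTerminator) ∧ IsGluingList l P

/-- Starters and terminators alternate along the list. -/
def Alternating {Λ : Type} (l : List (Ipomset Λ)) : Prop :=
  List.Chain'
    (fun A B => ¬(A.IsStarter ∧ B.IsStarter) ∧ ¬(A.IsTerminator ∧ B.IsTerminator)) l

def IsSparseDecomp {Λ : Type} (l : List (Ipomset Λ)) (P : Ipomset Λ) : Prop :=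
  IsStepDecomp l P ∧ Alternating l

/-! ## Discrete steps as letters (for words over Ω) -/

/-- A letter denoting a starter (`isUp = true`) or terminator (`isUp = false`) with
conclist `U` (a list of labels, in event order) which starts/terminates the events at
the positions in `A`. -/
structure StepLetter (Λ : Type) : Type where
  U : List Λ
  A : Finset ℕ
  isUp : Bool

/-- The letter is well-formed (the started/terminated events are positions of `U`). -/
def ValidLetter {Λ : Type} (s : StepLetter Λ) : Prop := ∀ a ∈ s.A, a < s.U.length

/-- The letter is a well-formed element of `Ω_{≤ k}`. -/
def ValidLetterLe {Λ : Type} (k : ℕ) (s : StepLetter Λ) : Prop :=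
  ValidLetter s ∧ s.U.length ≤ k

/-- `g` enumerates the set `V` of events of `P` as the conclist `U` (in event order,
with matching labels). -/
def ConclistOf {Λ : Type} (P : Ipomset Λ) (V : Set ℕ) (U : List Λ) (g : ℕ → ℕ) : Prop :=
  Set.BijOn g (Set.Iio U.length) V ∧
    (∀ i : Fin U.length, P.lab (g i.1) = U.get i) ∧
    (∀ i j : ℕ, i < j → j < U.length → P.evord (g i) (g j))

/-- The discrete ipomset `D` realises the letter `s`. -/
def LetterMatches {Λ : Type} (s : StepLetter Λ) (D : Ipomset Λ) : Prop :=
  (if s.isUp then D.IsStarter else D.IsTerminator) ∧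
  ∃ g : ℕ → ℕ, ConclistOf D ↑D.E s.U g ∧
    ∀ i < s.U.length, (i ∈ s.A ↔ g i ∉ (if s.isUp then D.S else D.T))

/-- The word `w` of letters glues to the ipomset `P`. -/
def WordMatches {Λ : Type} (w : List (StepLetter Λ)) (P : Ipomset Λ) : Prop :=
  ∃ l : List (Ipomset Λ), List.Forall₂ LetterMatches w l ∧ IsGluingList l P

/-! ## Higher-dimensional automata -/

/-- Remove from the list `U` the entries at positions in `A`. -/
def removeIdx {Λ : Type} (U : List Λ) (A : Finset ℕ) : List Λ :=
  (List.range U.length).filterMap (fun i => if i ∈ A then none else U[i]?)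

/-- Positions of the elements of `A` after the elements at positions in `B` are removed. -/
def reindex (B A : Finset ℕ) : Finset ℕ :=
  A.image (fun a => a - (B.filter (· < a)).card)

/-- A higher-dimensional automaton: a finite precubical set (cells with conclists of
active events and lower/upper face maps, `face false` = δ⁰ and `face true` = δ¹)
with start and accept cells. -/
structure HDA (Λ : Type) : Type 1 where
  Cell : Type
  fin : Fintype Cell
  ev : Cell → List Λ
  face : Bool → Finset ℕ → Cell → Cell
  face_ev : ∀ ν A q, (∀ a ∈ A, a < (ev q).length) →
      ev (face ν A q) = removeIdx (ev q) A
  face_comm : ∀ ν μ A B q, (∀ a ∈ A, a < (ev q).length) → (∀ b ∈ B, b < (ev q).length) →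
      Disjoint A B →
      face ν (reindex B A) (face μ B q) = face μ (reindex A B) (face ν A q)
  start : Set Cell
  accept : Set Cell

namespace HDA

variable {Λ : Type}

/-- Paths in an HDA, together with the word of starter/terminator letters they induce
(a single cell contributes its identity letter; an upstep from `δ⁰_A(q)` to `q`
contributes the starter on `ev q` starting `A`; a downstep from `q` to `δ¹_A(q)`
contributes the terminator on `ev q` terminating `A`). -/
inductive Path (H : HDA Λ) : H.Cell → H.Cell → List (StepLetter Λ) → Prop
  | nil (q : H.Cell) : Path H q q [⟨H.ev q, ∅, true⟩]
  | up {p : H.Cell} {w : List (StepLetter Λ)} (r : H.Cell) (A : Finset ℕ)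
      (hA : ∀ a ∈ A, a < (H.ev r).length) :
      Path H r p w → Path H (H.face false A r) p (⟨H.ev r, A, true⟩ :: w)
  | down {p : H.Cell} {w : List (StepLetter Λ)} (q : H.Cell) (A : Finset ℕ)
      (hA : ∀ a ∈ A, a < (H.ev q).length) :
      Path H (H.face true A q) p w → Path H q p (⟨H.ev q, A, false⟩ :: w)

/-- The language of an HDA: all ipomsets arising as gluings of the words of letters of
accepting paths. -/
def Lang (H : HDA Λ) : Set (Ipomset Λ) :=
  {P | ∃ q p w, q ∈ H.start ∧ p ∈ H.accept ∧ Path H q p w ∧ WordMatches w P}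

/-- The dimension of an HDA. -/
noncomputable def dim (H : HDA Λ) : ℕ :=
  letI := H.fin
  Finset.univ.sup (fun q => (H.ev q).length)

/-- An upstep of an HDA: `(δ⁰_A(q), ↗A, q)`. -/
structure UpStep (H : HDA Λ) : Type where
  cell : H.Cell
  A : Finset ℕ
  valid : ∀ a ∈ A, a < (H.ev cell).length

def UpStep.src {H : HDA Λ} (u : H.UpStep) : H.Cell := H.face false u.A u.cell
def UpStep.tgt {H : HDA Λ} (u : H.UpStep) : H.Cell := u.cell

/-- A downstep of an HDA: `(q, ↘A, δ¹_A(q))`. -/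
structure DownStep (H : HDA Λ) : Type where
  cell : H.Cell
  A : Finset ℕ
  valid : ∀ a ∈ A, a < (H.ev cell).length

def DownStep.src {H : HDA Λ} (d : H.DownStep) : H.Cell := d.cell
def DownStep.tgt {H : HDA Λ} (d : H.DownStep) : H.Cell := H.face true d.A d.cell

end HDA

/-- A set of ipomsets is regular if it is the language of a finite HDA. -/
def Regular {Λ : Type} (L : Set (Ipomset Λ)) : Prop := ∃ H : HDA Λ, HDA.Lang H = L

/-! ## Rational languages -/

/-- Rational languages: generated from ∅, {id_∅} and discrete ipomsets by union,
gluing composition and Kleene plus, each operation followed by closure under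
subsumption. -/
inductive Rational {Λ : Type} : Set (Ipomset Λ) → Prop
  | empty : Rational ∅
  | emptyId : Rational {P : Ipomset Λ | P.E = ∅}
  | single (D : Ipomset Λ) (hD : D.Discrete) :
      Rational (downc {P | Ipomset.Isomorphic P D})
  | union {L₁ L₂ : Set (Ipomset Λ)} : Rational L₁ → Rational L₂ →
      Rational (downc (L₁ ∪ L₂))
  | glue {L₁ L₂ : Set (Ipomset Λ)} : Rational L₁ → Rational L₂ →
      Rational (downc {R | ∃ P ∈ L₁, ∃ Q ∈ L₂, IsGluing P Q R})
  | plus {L : Set (Ipomset Λ)} : Rational L →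
      Rational (downc {R | ∃ l : List (Ipomset Λ), l ≠ [] ∧ (∀ Q ∈ l, Q ∈ L) ∧ IsGluingList l R})

/-! ## MSO over ipomsets -/

/-- MSO formulas over the signature `{<, ⇝, (a)_{a ∈ Λ}, s, t}`; first- and second-order
variables are indexed by ℕ. -/
inductive MSO (Λ : Type) : Type
  | lt : ℕ → ℕ → MSO Λ
  | ev : ℕ → ℕ → MSO Λ
  | lab : Λ → ℕ → MSO Λ
  | src : ℕ → MSO Λ
  | tgt : ℕ → MSO Λ
  | mem : ℕ → ℕ → MSO Λ
  | not : MSO Λ → MSO Λ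
  | and : MSO Λ → MSO Λ → MSO Λ
  | exFO : ℕ → MSO Λ → MSO Λ
  | exSO : ℕ → MSO Λ → MSO Λ

namespace MSO

variable {Λ : Type}

/-- Satisfaction of an MSO formula in an ipomset, under first- and second-order
valuations. -/
def Sat (P : Ipomset Λ) : MSO Λ → (ℕ → ℕ) → (ℕ → Set ℕ) → Prop
  | .lt x y, ν, _ => P.lt (ν x) (ν y)
  | .ev x y, ν, _ => P.evord (ν x) (ν y)
  | .lab a x, ν, _ => ν x ∈ P.E ∧ P.lab (ν x) = a
  | .src x, ν, _ => ν x ∈ P.S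
  | .tgt x, ν, _ => ν x ∈ P.T
  | .mem x X, ν, μ => ν x ∈ μ X
  | .not φ, ν, μ => ¬ Sat P φ ν μ
  | .and φ ψ, ν, μ => Sat P φ ν μ ∧ Sat P ψ ν μ
  | .exFO x φ, ν, μ => ∃ e ∈ P.E, Sat P φ (Function.update ν x e) μ
  | .exSO X φ, ν, μ => ∃ A : Set ℕ, A ⊆ ↑P.E ∧ Sat P φ ν (Function.update μ X A)

/-- Free first-order variables. -/
def fv1 : MSO Λ → Finset ℕ
  | .lt x y => {x, y}
  | .ev x y => {x, y}
  | .lab _ x => {x}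
  | .src x => {x}
  | .tgt x => {x}
  | .mem x _ => {x}
  | .not φ => fv1 φ
  | .and φ ψ => fv1 φ ∪ fv1 ψ
  | .exFO x φ => fv1 φ \ {x}
  | .exSO _ φ => fv1 φ

/-- Free second-order variables. -/
def fv2 : MSO Λ → Finset ℕ
  | .mem _ X => {X}
  | .not φ => fv2 φ
  | .and φ ψ => fv2 φ ∪ fv2 ψ
  | .exFO _ φ => fv2 φ
  | .exSO X φ => fv2 φ \ {X}
  | _ => ∅

/-- A sentence: a formula with no free variables. -/
def Closed (φ : MSO Λ) : Prop := φ.fv1 = ∅ ∧ φ.fv2 = ∅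

/-- Satisfaction of a sentence. -/
def Models (P : Ipomset Λ) (φ : MSO Λ) : Prop :=
  Sat P φ (fun _ => 0) (fun _ => ∅)

end MSO

/-- A set of interval ipomsets is MSO-definable if it is the set of interval ipomsets
satisfying some MSO sentence. -/
def MSODefinable {Λ : Type} (L : Set (Ipomset Λ)) : Prop :=
  ∃ φ : MSO Λ, φ.Closed ∧ L = {P | P.Interval ∧ MSO.Models P φ}

/-! ## MSO over words -/

/-- MSO formulas over words on the alphabet `Γ`. -/
inductive WMSO (Γ : Type) : Type
  | letter : Γ → ℕ → WMSO Γ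
  | lt : ℕ → ℕ → WMSO Γ
  | mem : ℕ → ℕ → WMSO Γ
  | not : WMSO Γ → WMSO Γ
  | and : WMSO Γ → WMSO Γ → WMSO Γ
  | exFO : ℕ → WMSO Γ → WMSO Γ
  | exSO : ℕ → WMSO Γ → WMSO Γ

namespace WMSO

variable {Γ : Type}

/-- Satisfaction of a word MSO formula in a word `w : List Γ`. -/
def Sat (w : List Γ) : WMSO Γ → (ℕ → ℕ) → (ℕ → Set ℕ) → Prop
  | .letter a x, ν, _ => w[ν x]? = some a
  | .lt x y, ν, _ => ν x < ν y
  | .mem x X, ν, μ => ν x ∈ μ X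
  | .not φ, ν, μ => ¬ Sat w φ ν μ
  | .and φ ψ, ν, μ => Sat w φ ν μ ∧ Sat w ψ ν μ
  | .exFO x φ, ν, μ => ∃ i < w.length, Sat w φ (Function.update ν x i) μ
  | .exSO X φ, ν, μ => ∃ A : Set ℕ, A ⊆ Set.Iio w.length ∧ Sat w φ ν (Function.update μ X A)

def fv1 : WMSO Γ → Finset ℕ
  | .letter _ x => {x}
  | .lt x y => {x, y}
  | .mem x _ => {x}
  | .not φ => fv1 φ
  | .and φ ψ => fv1 φ ∪ fv1 ψ
  | .exFO x φ => fv1 φ \ {x}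
  | .exSO _ φ => fv1 φ

def fv2 : WMSO Γ → Finset ℕ
  | .mem _ X => {X}
  | .not φ => fv2 φ
  | .and φ ψ => fv2 φ ∪ fv2 ψ
  | .exFO _ φ => fv2 φ
  | .exSO X φ => fv2 φ \ {X}
  | _ => ∅

def Closed (φ : WMSO Γ) : Prop := φ.fv1 = ∅ ∧ φ.fv2 = ∅

def Models (w : List Γ) (φ : WMSO Γ) : Prop :=
  Sat w φ (fun _ => 0) (fun _ => ∅)

end WMSO

/-! ## Step indices in a step decomposition -/

/-- The (1-indexed) step at which event `e` is started in the decomposition `l` of `P`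
(`⊥ = −∞` for source events). -/
noncomputable def StIdx {Λ : Type} (P : Ipomset Λ) (l : List (Ipomset Λ)) (e : ℕ) : EReal :=
  if e ∈ P.S then ⊥
  else sInf {x : EReal | ∃ ℓ : Fin l.length, e ∈ (l.get ℓ).E ∧ x = ((ℓ : ℕ) : EReal) + 1}

/-- The (1-indexed) step at which event `e` is terminated in the decomposition `l` of `P`
(`⊤ = +∞` for target events). -/
noncomputable def TeIdx {Λ : Type} (P : Ipomset Λ) (l : List (Ipomset Λ)) (e : ℕ) : EReal :=
  if e ∈ P.T then ⊤
  else sSup {x : EReal | ∃ ℓ : Fin l.length, e ∈ (l.get ℓ).E ∧ x = ((ℓ : ℕ) : EReal) + 1}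

/-- Select `St` (`true`) or `Te` (`false`). -/
noncomputable def selIdx {Λ : Type} (P : Ipomset Λ) (l : List (Ipomset Λ)) (f : Bool)
    (e : ℕ) : EReal :=
  if f then StIdx P l e else TeIdx P l e


/-! ## Auxiliary development -/

namespace SparseAux

open Ipomset

variable {Λ : Type}

/-- Restriction of a relation to a finite set. -/
def rres (r : ℕ → ℕ → Prop) (X : Finset ℕ) : ℕ → ℕ → Prop :=
  fun a b => r a b ∧ a ∈ X ∧ b ∈ X

lemma relext {r s : ℕ → ℕ → Prop} (h : ∀ a b, r a b ↔ s a b) : r = s :=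
  funext fun a => funext fun b => propext (h a b)

open Classical in
noncomputable def Mset (P : Ipomset Λ) : Finset ℕ :=
  P.E.filter (fun e => ∀ e', ¬ P.lt e' e)

open Classical in
lemma mem_Mset {P : Ipomset Λ} {e : ℕ} :
    e ∈ Mset P ↔ e ∈ P.E ∧ ∀ e', ¬ P.lt e' e := Finset.mem_filter

open Classical in
noncomputable def F0 (P : Ipomset Λ) : Finset ℕ :=
  P.S.filter (fun e => ∀ e' ∈ P.E, e' ∉ P.S → P.lt e e')

open Classical in
lemma mem_F0 {P : Ipomset Λ} {e : ℕ} :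
    e ∈ F0 P ↔ e ∈ P.S ∧ ∀ e' ∈ P.E, e' ∉ P.S → P.lt e e' := Finset.mem_filter

lemma F0_subset_S (P : Ipomset Λ) : F0 P ⊆ P.S := fun _ h => (mem_F0.mp h).1

lemma S_subset_Mset (P : Ipomset Λ) : P.S ⊆ Mset P := fun e he =>
  mem_Mset.mpr ⟨P.S_sub he, P.S_min e he⟩

lemma Mset_subset_E (P : Ipomset Λ) : Mset P ⊆ P.E := fun _ h => (mem_Mset.mp h).1

lemma Mset_eq_of_discrete {P : Ipomset Λ} (h : P.Discrete) : Mset P = P.E := by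
  apply Finset.Subset.antisymm (Mset_subset_E P)
  intro e he; exact mem_Mset.mpr ⟨he, fun e' => h e' e⟩

lemma discrete_of_Mset_eq {P : Ipomset Λ} (h : Mset P = P.E) : P.Discrete := by
  intro a b hab
  exact (mem_Mset.mp (h ▸ (P.lt_dom a b hab).2)).2 a hab

lemma Mset_congr {P Q : Ipomset Λ} (hE : P.E = Q.E) (hlt : P.lt = Q.lt) :
    Mset P = Mset Q := by
  ext e; rw [mem_Mset, mem_Mset, hE, hlt]

lemma F0_congr {P Q : Ipomset Λ} (hE : P.E = Q.E) (hS : P.S = Q.S) (hlt : P.lt = Q.lt) :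
    F0 P = F0 Q := by
  ext e; rw [mem_F0, mem_F0, hE, hS, hlt]

/-- Agreement of all data (labels only on the event set). -/
structure Eqv (P Q : Ipomset Λ) : Prop where
  E_eq : P.E = Q.E
  S_eq : P.S = Q.S
  T_eq : P.T = Q.T
  lt_eq : P.lt = Q.lt
  evord_eq : P.evord = Q.evord
  lab_eq : ∀ e ∈ P.E, P.lab e = Q.lab e

lemma Eqv.refl (P : Ipomset Λ) : Eqv P P := ⟨rfl, rfl, rfl, rfl, rfl, fun _ _ => rfl⟩

lemma Eqv.symm {P Q : Ipomset Λ} (h : Eqv P Q) : Eqv Q P :=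
  ⟨h.E_eq.symm, h.S_eq.symm, h.T_eq.symm, h.lt_eq.symm, h.evord_eq.symm,
    fun e he => (h.lab_eq e (h.E_eq ▸ he)).symm⟩

lemma Eqv.trans {P Q R : Ipomset Λ} (h : Eqv P Q) (h' : Eqv Q R) : Eqv P R :=
  ⟨h.E_eq.trans h'.E_eq, h.S_eq.trans h'.S_eq, h.T_eq.trans h'.T_eq,
    h.lt_eq.trans h'.lt_eq, h.evord_eq.trans h'.evord_eq,
    fun e he => (h.lab_eq e he).trans (h'.lab_eq e (h.E_eq ▸ he))⟩

lemma Eqv.iso {P Q : Ipomset Λ} (h : Eqv P Q) : P.Isomorphic Q := by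
  refine ⟨id, ?_, ?_, ?_, ?_, ?_, ?_⟩
  · have : (↑P.E : Set ℕ) = ↑Q.E := by rw [h.E_eq]
    rw [this]; exact Set.bijOn_id _
  · intro e _; rw [h.S_eq]; rfl
  · intro e _; rw [h.T_eq]; rfl
  · intro e he; exact (h.lab_eq e he).symm
  · intro a _ b _; rw [h.lt_eq]; rfl
  · intro a _ b _; rw [h.evord_eq]; rfl

end SparseAux

namespace SparseAux

open Ipomset Relation

variable {Λ : Type}

lemma transGen_iff_of {r s : ℕ → ℕ → Prop} (h : ∀ a b, s a b ↔ r a b)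
    (htr : Transitive r) {a b : ℕ} : TransGen s a b ↔ r a b := by
  constructor
  · intro hab
    induction hab with
    | single h' => exact (h _ _).mp h'
    | tail _ h' ih => exact htr ih ((h _ _).mp h')
  · intro hab; exact TransGen.single ((h _ _).mpr hab)

lemma glt_of_Q {A Q P : Ipomset Λ} (hg : IsGluing A Q P) {a b : ℕ}
    (h : Q.lt a b) : P.lt a b :=
  (hg.lt_eq a b).mpr (TransGen.single (Or.inr (Or.inl h)))

lemma glt_cross {A Q P : Ipomset Λ} (hg : IsGluing A Q P) {a b : ℕ}
    (ha : a ∈ A.E) (ha' : a ∉ A.T) (hb : b ∈ Q.E) (hb' : b ∉ Q.S) : P.lt a b :=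
  (hg.lt_eq a b).mpr (TransGen.single (Or.inr (Or.inr ⟨ha, ha', hb, hb'⟩)))

lemma gQE_subset {A Q P : Ipomset Λ} (hg : IsGluing A Q P) : Q.E ⊆ P.E := by
  rw [hg.E_eq]; exact Finset.subset_union_right

lemma gAE_subset {A Q P : Ipomset Λ} (hg : IsGluing A Q P) : A.E ⊆ P.E := by
  rw [hg.E_eq]; exact Finset.subset_union_left

/-- Precedence starting from an event present in `Q` stays in `Q`. -/
lemma gnoCross {A Q P : Ipomset Λ} (hg : IsGluing A Q P) {a b : ℕ}
    (hab : P.lt a b) (ha : a ∈ Q.E) : Q.lt a b := by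
  have key : ∀ {x : ℕ}, TransGen (glueBase A Q) x b → x ∈ Q.E → Q.lt x b := by
    intro x h
    induction h using Relation.TransGen.head_induction_on with
    | single h' =>
      intro hx
      rcases h' with h' | h' | ⟨hae, hat, _, _⟩
      · exact absurd (hg.inter _ (A.lt_dom _ _ h').1 hx) (fun hT => A.T_max _ hT _ h')
      · exact h'
      · exact absurd (hg.inter _ hae hx) hat
    | head h' _ ihc =>
      intro hx
      rcases h' with h' | h' | ⟨hae, hat, _, _⟩
      · exact absurd (hg.inter _ (A.lt_dom _ _ h').1 hx) (fun hT => A.T_max _ hT _ h')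
      · exact Q.lt_trans _ _ _ h' (ihc (Q.lt_dom _ _ h').2)
      · exact absurd (hg.inter _ hae hx) hat
  exact key ((hg.lt_eq a b).mp hab) ha

lemma glist_single {A P : Ipomset Λ} (h : IsGluingList [A] P) : A = P := by
  cases h with
  | single => rfl
  | cons h' _ => cases h'

lemma glist_cons {A : Ipomset Λ} {r : List (Ipomset Λ)} {B : Ipomset Λ} {P : Ipomset Λ}
    (h : IsGluingList (A :: B :: r) P) :
    ∃ Q, IsGluingList (B :: r) Q ∧ IsGluing A Q P := by
  cases h with
  | cons h' hg => exact ⟨_, h', hg⟩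

lemma glist_inv {B : Ipomset Λ} {r : List (Ipomset Λ)} {Q : Ipomset Λ}
    (h : IsGluingList (B :: r) Q) :
    (r = [] ∧ B = Q) ∨ ∃ R, IsGluingList r R ∧ IsGluing B R Q := by
  cases h with
  | single => exact Or.inl ⟨rfl, rfl⟩
  | cons h' hg => exact Or.inr ⟨_, h', hg⟩

lemma glist_head_S {B : Ipomset Λ} {r : List (Ipomset Λ)} {Q : Ipomset Λ}
    (h : IsGluingList (B :: r) Q) : Q.S = B.S := by
  cases h with
  | single => rfl
  | cons _ hg => exact hg.S_eq

lemma glist_head_E {B : Ipomset Λ} {r : List (Ipomset Λ)} {Q : Ipomset Λ}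
    (h : IsGluingList (B :: r) Q) : B.E ⊆ Q.E := by
  cases h with
  | single => exact Finset.Subset.refl _
  | cons _ hg => exact gAE_subset hg

/-- Any precedence chain ends with a single step. -/
lemma transGen_last {r : ℕ → ℕ → Prop} {a b : ℕ} (h : TransGen r a b) :
    ∃ c, r c b := by
  cases h with
  | single h' => exact ⟨a, h'⟩
  | tail _ h' => exact ⟨_, h'⟩

/-- No precedence into a freshly started event of the head starter of a gluing list. -/
lemma no_lt_into_new {B : Ipomset Λ} {r : List (Ipomset Λ)} {Q : Ipomset Λ}
    (h : IsGluingList (B :: r) Q) (hBd : B.Discrete) {g : ℕ} (hg : g ∈ B.E)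
    (hg' : g ∉ B.S) (x : ℕ) : ¬ Q.lt x g := by
  intro hlt
  rcases glist_inv h with ⟨rfl, rfl⟩ | ⟨R, hR, hgl⟩
  · exact hBd x g hlt
  · obtain ⟨c, hc⟩ := transGen_last ((hgl.lt_eq x g).mp hlt)
    rcases hc with hc | hc | ⟨_, _, hgR, hgS⟩
    · exact hBd c g hc
    · have hgR : g ∈ R.E := (R.lt_dom _ _ hc).2
      have hgT : g ∈ B.T := hgl.inter g hg hgR
      rw [hgl.match_TS] at hgT
      exact R.S_min g hgT c hc
    · exact hgS (hgl.match_TS ▸ hgl.inter g hg hgR)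

end SparseAux

namespace SparseAux

open Ipomset Relation

variable {Λ : Type}

structure StarterPeel (A Q P : Ipomset Λ) : Prop where
  AE : A.E = Mset P
  AS : A.S = P.S
  AT : A.T = Mset P
  Alt : A.lt = fun _ _ => False
  Aev : A.evord = rres P.evord (Mset P)
  Alab : ∀ e ∈ Mset P, A.lab e = P.lab e
  QE : Q.E = P.E
  QS : Q.S = Mset P
  QT : Q.T = P.T
  Qlt : Q.lt = P.lt
  Qev : Q.evord = P.evord
  Qlab : ∀ e ∈ P.E, Q.lab e = P.lab e

lemma peelStarter {A Q P B : Ipomset Λ} {r : List (Ipomset Λ)}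
    (hg : IsGluing A Q P) (hA : A.IsStarter) (hl : IsGluingList (B :: r) Q)
    (hB : B.IsTerminator) (hBp : B.T ≠ B.E) : StarterPeel A Q P := by
  have hTA : A.T = A.E := hA.2
  have hQS : Q.S = A.E := by rw [← hg.match_TS, hTA]
  have hPQlt : P.lt = Q.lt := by
    apply relext; intro a b
    rw [hg.lt_eq]
    apply transGen_iff_of _ (fun x y z hxy hyz => Q.lt_trans x y z hxy hyz)
    intro x y
    constructor
    · rintro (h | h | ⟨hae, hat, _, _⟩)
      · exact absurd h (hA.1 x y)
      · exact h
      · exact absurd (hTA ▸ hae) hat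
    · intro h; exact Or.inr (Or.inl h)
  have hAE : A.E = Mset P := by
    apply Finset.Subset.antisymm
    · intro e he
      exact mem_Mset.mpr ⟨gAE_subset hg he, fun x => hPQlt ▸ Q.S_min e (hQS ▸ he) x⟩
    · intro e he
      by_contra he'
      have heQ : e ∈ Q.E := by
        have := hg.E_eq ▸ (mem_Mset.mp he).1
        rcases Finset.mem_union.mp this with h | h
        · exact absurd h he'
        · exact h
      have heQS : e ∉ Q.S := fun h => he' (hQS ▸ h)
      obtain ⟨f, hf, hf'⟩ := Finset.exists_of_ssubset (lt_of_le_of_ne B.T_sub hBp)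
      rcases glist_inv hl with ⟨rfl, rfl⟩ | ⟨R, h', hgl⟩
      · exact heQS (show e ∈ B.S by rw [hB.2]; exact heQ)
      · have heB : e ∉ B.E := by rw [← hB.2, ← hgl.S_eq]; exact heQS
        have heR : e ∈ R.E := by
          rcases Finset.mem_union.mp (hgl.E_eq ▸ heQ) with h | h
          · exact absurd h heB
          · exact h
        have heRS : e ∉ R.S := fun h => heB (B.T_sub (hgl.match_TS ▸ h))
        have : Q.lt f e := glt_cross hgl hf hf' heR heRS
        exact (mem_Mset.mp he).2 f (hPQlt ▸ this)
  have hAEQ : A.E ⊆ Q.E := hQS ▸ Q.S_sub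
  refine ⟨hAE, hg.S_eq.symm, hTA.trans hAE, ?_, ?_, ?_, ?_, hAE ▸ hQS, hg.T_eq.symm,
    hPQlt.symm, ?_, ?_⟩
  · exact relext fun a b => ⟨fun h => hA.1 a b h, False.elim⟩
  · apply relext; intro a b
    constructor
    · intro h
      exact ⟨(hg.evord_eq a b).mpr (Or.inl h), hAE ▸ (A.evord_dom a b h).1,
        hAE ▸ (A.evord_dom a b h).2⟩
    · rintro ⟨h, ha, hb⟩
      rw [← hAE] at ha hb
      rcases (hg.evord_eq a b).mp h with h' | h'
      · exact h'
      · exact (hg.evord_agree a (hTA ▸ ha) b (hTA ▸ hb)).mpr h'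
  · intro e he; exact (hg.lab_P e (hAE ▸ he)).symm
  · apply Finset.Subset.antisymm
    · rw [hg.E_eq]; exact Finset.subset_union_right
    · rw [hg.E_eq]; exact Finset.union_subset hAEQ (Finset.Subset.refl _)
  · apply relext; intro a b
    constructor
    · intro h; exact (hg.evord_eq a b).mpr (Or.inr h)
    · intro h
      rcases (hg.evord_eq a b).mp h with h' | h'
      · exact (hg.evord_agree a (hTA ▸ (A.evord_dom a b h').1)
          b (hTA ▸ (A.evord_dom a b h').2)).mp h'
      · exact h'
  · intro e he
    exact (hg.lab_Q e (by
      rw [hg.E_eq] at he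
      rcases Finset.mem_union.mp he with h | h
      · exact hAEQ h
      · exact h)).symm

structure TerminatorPeel (A Q P : Ipomset Λ) : Prop where
  AE : A.E = P.S
  AS : A.S = P.S
  AT : A.T = P.S \ F0 P
  Alt : A.lt = fun _ _ => False
  Aev : A.evord = rres P.evord P.S
  Alab : ∀ e ∈ P.S, A.lab e = P.lab e
  QE : Q.E = P.E \ F0 P
  QS : Q.S = P.S \ F0 P
  QT : Q.T = P.T
  Qlt : Q.lt = rres P.lt (P.E \ F0 P)
  Qev : Q.evord = rres P.evord (P.E \ F0 P)
  Qlab : ∀ e ∈ P.E \ F0 P, Q.lab e = P.lab e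

lemma peelTerminator {A Q P B : Ipomset Λ} {r : List (Ipomset Λ)}
    (hg : IsGluing A Q P) (hA : A.IsTerminator) (hl : IsGluingList (B :: r) Q)
    (hB : B.IsStarter) (hBp : B.S ≠ B.E) : TerminatorPeel A Q P := by
  have hSA : A.S = A.E := hA.2
  have hAE : A.E = P.S := by rw [← hSA, hg.S_eq]
  have hQS : Q.S = A.T := hg.match_TS.symm
  -- F0 P = A.E \ A.T
  have hF : F0 P = A.E \ A.T := by
    apply Finset.Subset.antisymm
    · -- e ∈ F0 P → e ∈ A.E \ A.T
      intro e he
      obtain ⟨heS, hlt⟩ := mem_F0.mp he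
      refine Finset.mem_sdiff.mpr ⟨hAE ▸ heS, ?_⟩
      intro heT
      -- pick fresh event g of B
      obtain ⟨g, hgB, hgBS⟩ := Finset.exists_of_ssubset (lt_of_le_of_ne B.S_sub
        (fun h => hBp h))
      have hgQ : g ∈ Q.E := glist_head_E hl hgB
      have hgPS : g ∉ P.S := by
        rw [← hAE]
        intro hgA
        exact hgBS ((glist_head_S hl) ▸ hQS ▸ hg.inter g hgA hgQ)
      have hgPE : g ∈ P.E := gQE_subset hg hgQ
      have hPlt : P.lt e g := hlt g hgPE hgPS
      have hQlt : Q.lt e g := gnoCross hg hPlt (Q.S_sub (hQS ▸ heT))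
      exact no_lt_into_new hl hB.1 hgB hgBS e hQlt
    · -- A.E \ A.T ⊆ F0 P
      intro f hf
      obtain ⟨hfA, hfT⟩ := Finset.mem_sdiff.mp hf
      refine mem_F0.mpr ⟨hAE ▸ hfA, ?_⟩
      intro e' he' hns
      have he'Q : e' ∈ Q.E := by
        rcases Finset.mem_union.mp (hg.E_eq ▸ he') with h | h
        · exact absurd (hAE ▸ h) hns
        · exact h
      have he'QS : e' ∉ Q.S := fun h => hns (hAE ▸ A.T_sub (hQS ▸ h))
      exact glt_cross hg hfA hfT he'Q he'QS
  have hAT : A.T = P.S \ F0 P := by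
    rw [hF, ← hAE, Finset.sdiff_sdiff_self_left, Finset.inter_eq_right.mpr A.T_sub]
  have hQE : Q.E = P.E \ F0 P := by
    apply Finset.Subset.antisymm
    · intro x hx
      refine Finset.mem_sdiff.mpr ⟨gQE_subset hg hx, ?_⟩
      rw [hF]
      intro hxF
      exact (Finset.mem_sdiff.mp hxF).2 (hQS ▸ hg.inter x (Finset.mem_sdiff.mp hxF).1 hx)
    · intro x hx
      obtain ⟨hxE, hxF⟩ := Finset.mem_sdiff.mp hx
      rcases Finset.mem_union.mp (hg.E_eq ▸ hxE) with h | h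
      · have : x ∈ A.T := by
          by_contra hxT
          exact hxF (hF ▸ Finset.mem_sdiff.mpr ⟨h, hxT⟩)
        exact Q.S_sub (hQS ▸ this)
      · exact h
  refine ⟨hAE, hSA.trans hAE, hAT, ?_, ?_, ?_, hQE, hQS.trans hAT, hg.T_eq.symm, ?_, ?_, ?_⟩
  · exact relext fun a b => ⟨fun h => hA.1 a b h, False.elim⟩
  · apply relext; intro a b
    constructor
    · intro h
      exact ⟨(hg.evord_eq a b).mpr (Or.inl h), hAE ▸ (A.evord_dom a b h).1,
        hAE ▸ (A.evord_dom a b h).2⟩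
    · rintro ⟨h, ha, hb⟩
      rw [← hAE] at ha hb
      rcases (hg.evord_eq a b).mp h with h' | h'
      · exact h'
      · have haT : a ∈ A.T := hg.inter a ha (Q.evord_dom a b h').1
        have hbT : b ∈ A.T := hg.inter b hb (Q.evord_dom a b h').2
        exact (hg.evord_agree a haT b hbT).mpr h'
  · intro e he; exact (hg.lab_P e (hAE ▸ he)).symm
  · apply relext; intro a b
    constructor
    · intro h
      exact ⟨glt_of_Q hg h, hQE ▸ (Q.lt_dom a b h).1, hQE ▸ (Q.lt_dom a b h).2⟩
    · rintro ⟨h, ha, _⟩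
      exact gnoCross hg h (hQE ▸ ha)
  · apply relext; intro a b
    constructor
    · intro h
      exact ⟨(hg.evord_eq a b).mpr (Or.inr h), hQE ▸ (Q.evord_dom a b h).1,
        hQE ▸ (Q.evord_dom a b h).2⟩
    · rintro ⟨h, ha, hb⟩
      rw [← hQE] at ha hb
      rcases (hg.evord_eq a b).mp h with h' | h'
      · have haT : a ∈ A.T := hg.inter a (A.evord_dom a b h').1 ha
        have hbT : b ∈ A.T := hg.inter b (A.evord_dom a b h').2 hb
        exact (hg.evord_agree a haT b hbT).mp h'
      · exact h'
  · intro e he; exact (hg.lab_Q e (hQE ▸ he)).symm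

end SparseAux

namespace SparseAux

open Ipomset Relation

variable {Λ : Type}

/-- Propriety of adjacent steps in an alternating list. -/
lemma properHead {A B : Ipomset Λ} (hA : A.IsStarter ∨ A.IsTerminator)
    (hB : B.IsStarter ∨ B.IsTerminator)
    (hrel : ¬(A.IsStarter ∧ B.IsStarter) ∧ ¬(A.IsTerminator ∧ B.IsTerminator)) :
    (A.IsStarter ∧ ¬A.IsTerminator ∧ B.IsTerminator ∧ ¬B.IsStarter) ∨
    (A.IsTerminator ∧ ¬A.IsStarter ∧ B.IsStarter ∧ ¬B.IsTerminator) := by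
  rcases hA with hA' | hA'
  · left
    have hBt : B.IsTerminator := by
      rcases hB with h | h
      · exact absurd ⟨hA', h⟩ hrel.1
      · exact h
    have hAnt : ¬A.IsTerminator := fun h => hrel.2 ⟨h, hBt⟩
    exact ⟨hA', hAnt, hBt, fun h => hrel.1 ⟨hA', h⟩⟩
  · right
    have hBs : B.IsStarter := by
      rcases hB with h | h
      · exact h
      · exact absurd ⟨hA', h⟩ hrel.2
    have hAns : ¬A.IsStarter := fun h => hrel.1 ⟨h, hBs⟩
    exact ⟨hA', hAns, hBs, fun h => hrel.2 ⟨hA', h⟩⟩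

lemma starter_proper {A : Ipomset Λ} (h : A.IsStarter) (h' : ¬A.IsTerminator) :
    A.S ≠ A.E := fun he => h' ⟨h.1, he⟩

lemma terminator_proper {A : Ipomset Λ} (h : A.IsTerminator) (h' : ¬A.IsStarter) :
    A.T ≠ A.E := fun he => h' ⟨h.1, he⟩

/-- A discrete starter or terminator has no sparse decomposition of length ≥ 2. -/
lemma discreteShort {P A B : Ipomset Λ} {r : List (Ipomset Λ)}
    (hd : P.Discrete) (hST : P.S = P.E ∨ P.T = P.E)
    (h : IsSparseDecomp (A :: B :: r) P) : False := by
  obtain ⟨⟨_, hmem, hgl⟩, halt⟩ := h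
  obtain ⟨Q, hQl, hg⟩ := glist_cons hgl
  have hrelAB := (List.isChain_cons_cons.mp halt).1
  rcases properHead (hmem A (by simp)) (hmem B (by simp)) hrelAB with
    ⟨hAst, hAnt, hBte, hBns⟩ | ⟨hAte, hAns, hBst, hBnt⟩
  · -- A proper starter, B proper terminator
    rcases hST with hSE | hTE
    · -- P.S = P.E
      have h1 : A.S ⊆ A.E := A.S_sub
      have h2 : A.E ⊆ P.E := gAE_subset hg
      have h3 : P.E = A.S := by rw [← hSE, hg.S_eq]
      exact starter_proper hAst hAnt (Finset.Subset.antisymm h1 (h3 ▸ h2))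
    · -- P.T = P.E
      have hQd : Q.Discrete := fun a b hab => hd a b (glt_of_Q hg hab)
      have hQTE : Q.T = Q.E := by
        apply Finset.Subset.antisymm Q.T_sub
        intro x hx
        have : x ∈ P.T := hTE ▸ gQE_subset hg hx
        rwa [hg.T_eq] at this
      rcases r with _ | ⟨C, r'⟩
      · have hBQ : B = Q := glist_single hQl
        subst hBQ
        exact terminator_proper hBte hBns hQTE
      · obtain ⟨R, h', hgl'⟩ := glist_cons hQl
        have hrelBC := ((List.isChain_cons_cons.mp halt).2).rel_head
        have hC := hmem C (by simp)
        obtain ⟨-, -, hCst, hCnt⟩ :=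
          (properHead (Or.inr hBte) hC hrelBC).resolve_left
            (fun h => h.2.1 hBte)
        obtain ⟨g, hgC, hgC'⟩ := Finset.exists_of_ssubset
          (lt_of_le_of_ne C.S_sub (starter_proper hCst hCnt))
        obtain ⟨f, hfB, hfB'⟩ := Finset.exists_of_ssubset
          (lt_of_le_of_ne B.T_sub (terminator_proper hBte hBns))
        have hgR : g ∈ R.E := glist_head_E h' hgC
        have hgRS : g ∉ R.S := by rw [glist_head_S h']; exact hgC'
        exact hQd f g (glt_cross hgl' hfB hfB' hgR hgRS)
  · -- A proper terminator, B proper starter: P.lt nonempty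
    obtain ⟨f, hfA, hfA'⟩ := Finset.exists_of_ssubset
      (lt_of_le_of_ne A.T_sub (terminator_proper hAte hAns))
    obtain ⟨g, hgB, hgB'⟩ := Finset.exists_of_ssubset
      (lt_of_le_of_ne B.S_sub (starter_proper hBst hBnt))
    have hgQ : g ∈ Q.E := glist_head_E hQl hgB
    have hgQS : g ∉ Q.S := by rw [glist_head_S hQl]; exact hgB'
    exact hd f g (glt_cross hg hfA hfA' hgQ hgQS)

end SparseAux

namespace SparseAux

open Ipomset

variable {Λ : Type}

lemma F0_nonempty_of_peel {P A Q : Ipomset Λ} (tp : TerminatorPeel A Q P)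
    (hAp : A.T ≠ A.E) : (F0 P).Nonempty := by
  rcases Finset.eq_empty_or_nonempty (F0 P) with h | h
  · exact absurd (tp.AT.trans (by rw [h, Finset.sdiff_empty, ← tp.AE])) hAp
  · exact h

/-- Heads of two sparse decompositions of `Eqv` ipomsets cannot have different kinds. -/
lemma kindMix {P₁ P₂ A₁ Q₁ A₂ Q₂ : Ipomset Λ} (heqv : Eqv P₁ P₂)
    (sp₁ : StarterPeel A₁ Q₁ P₁) (hA₁p : A₁.S ≠ A₁.E)
    (tp₂ : TerminatorPeel A₂ Q₂ P₂) (hA₂p : A₂.T ≠ A₂.E) : False := by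
  obtain ⟨e, he⟩ := F0_nonempty_of_peel tp₂ hA₂p
  have hM : Mset P₁ = Mset P₂ := Mset_congr heqv.E_eq heqv.lt_eq
  have hSM : P₁.S ≠ Mset P₁ := by
    intro h; exact hA₁p (sp₁.AS.trans (h.trans sp₁.AE.symm))
  obtain ⟨m, hm, hm'⟩ := Finset.exists_of_ssubset
    (lt_of_le_of_ne (S_subset_Mset P₁) hSM)
  have hmE : m ∈ P₂.E := Mset_subset_E P₂ (hM ▸ hm)
  have hmS : m ∉ P₂.S := heqv.S_eq ▸ hm'
  exact (mem_Mset.mp (hM ▸ hm)).2 e ((mem_F0.mp he).2 m hmE hmS)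

lemma uniq : ∀ (n : ℕ) (l₁ : List (Ipomset Λ)), l₁.length ≤ n →
    ∀ (P₁ P₂ : Ipomset Λ) (l₂ : List (Ipomset Λ)), Eqv P₁ P₂ →
    IsSparseDecomp l₁ P₁ → IsSparseDecomp l₂ P₂ →
    List.Forall₂ Ipomset.Isomorphic l₁ l₂ := by
  intro n
  induction n with
  | zero =>
    intro l₁ hlen P₁ P₂ l₂ _ h₁ _
    cases l₁ with
    | nil => exact absurd rfl h₁.1.1
    | cons a l => simp at hlen
  | succ n ih =>
    intro l₁ hlen P₁ P₂ l₂ heqv h₁ h₂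
    rcases l₁ with _ | ⟨A₁, r₁'⟩
    · exact absurd rfl h₁.1.1
    rcases l₂ with _ | ⟨A₂, r₂'⟩
    · exact absurd rfl h₂.1.1
    rcases r₁' with _ | ⟨B₁, r₁⟩ <;> rcases r₂' with _ | ⟨B₂, r₂⟩
    · -- [A₁], [A₂]
      have e₁ : A₁ = P₁ := glist_single h₁.1.2.2
      have e₂ : A₂ = P₂ := glist_single h₂.1.2.2
      exact List.Forall₂.cons (e₁ ▸ e₂ ▸ heqv.iso) List.Forall₂.nil
    · -- [A₁], A₂ :: B₂ :: r₂
      have e₁ : A₁ = P₁ := glist_single h₁.1.2.2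
      have hA₁ := h₁.1.2.1 A₁ (by simp)
      rw [e₁] at hA₁
      have hd₂ : P₂.Discrete := by
        intro a b; rw [← heqv.lt_eq]
        rcases hA₁ with h | h
        · exact h.1 a b
        · exact h.1 a b
      have hST₂ : P₂.S = P₂.E ∨ P₂.T = P₂.E := by
        rcases hA₁ with h | h
        · exact Or.inr (heqv.T_eq ▸ heqv.E_eq ▸ h.2)
        · exact Or.inl (heqv.S_eq ▸ heqv.E_eq ▸ h.2)
      exact absurd h₂ (fun h => discreteShort hd₂ hST₂ h)
    · -- A₁ :: B₁ :: r₁, [A₂]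
      have e₂ : A₂ = P₂ := glist_single h₂.1.2.2
      have hA₂ := h₂.1.2.1 A₂ (by simp)
      rw [e₂] at hA₂
      have hd₁ : P₁.Discrete := by
        intro a b; rw [heqv.lt_eq]
        rcases hA₂ with h | h
        · exact h.1 a b
        · exact h.1 a b
      have hST₁ : P₁.S = P₁.E ∨ P₁.T = P₁.E := by
        rcases hA₂ with h | h
        · exact Or.inr (heqv.T_eq ▸ heqv.E_eq ▸ h.2)
        · exact Or.inl (heqv.S_eq ▸ heqv.E_eq ▸ h.2)
      exact absurd h₁ (fun h => discreteShort hd₁ hST₁ h)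
    · -- both of length ≥ 2
      obtain ⟨⟨-, hmem₁, hgl₁⟩, halt₁⟩ := h₁
      obtain ⟨⟨-, hmem₂, hgl₂⟩, halt₂⟩ := h₂
      obtain ⟨Q₁, hQl₁, hg₁⟩ := glist_cons hgl₁
      obtain ⟨Q₂, hQl₂, hg₂⟩ := glist_cons hgl₂
      have hrel₁ := (List.isChain_cons_cons.mp halt₁).1
      have hrel₂ := (List.isChain_cons_cons.mp halt₂).1
      have hM : Mset P₁ = Mset P₂ := Mset_congr heqv.E_eq heqv.lt_eq
      have hF : F0 P₁ = F0 P₂ := F0_congr heqv.E_eq heqv.S_eq heqv.lt_eq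
      have htail₁ : IsSparseDecomp (B₁ :: r₁) Q₁ :=
        ⟨⟨List.cons_ne_nil _ _, fun X hX => hmem₁ X (List.mem_cons_of_mem _ hX), hQl₁⟩,
          (List.isChain_cons_cons.mp halt₁).2⟩
      have htail₂ : IsSparseDecomp (B₂ :: r₂) Q₂ :=
        ⟨⟨List.cons_ne_nil _ _, fun X hX => hmem₂ X (List.mem_cons_of_mem _ hX), hQl₂⟩,
          (List.isChain_cons_cons.mp halt₂).2⟩
      have hlen' : (B₁ :: r₁).length ≤ n := by
        simp only [List.length_cons] at hlen ⊢; omega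
      rcases properHead (hmem₁ A₁ (by simp)) (hmem₁ B₁ (by simp)) hrel₁ with
        ⟨hA₁st, hA₁nt, hB₁te, hB₁ns⟩ | ⟨hA₁te, hA₁ns, hB₁st, hB₁nt⟩ <;>
      rcases properHead (hmem₂ A₂ (by simp)) (hmem₂ B₂ (by simp)) hrel₂ with
        ⟨hA₂st, hA₂nt, hB₂te, hB₂ns⟩ | ⟨hA₂te, hA₂ns, hB₂st, hB₂nt⟩
      · -- both starters
        have sp₁ := peelStarter hg₁ hA₁st hQl₁ hB₁te (terminator_proper hB₁te hB₁ns)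
        have sp₂ := peelStarter hg₂ hA₂st hQl₂ hB₂te (terminator_proper hB₂te hB₂ns)
        have hAeqv : Eqv A₁ A₂ := by
          refine ⟨sp₁.AE.trans (hM.trans sp₂.AE.symm),
            sp₁.AS.trans (heqv.S_eq.trans sp₂.AS.symm),
            sp₁.AT.trans (hM.trans sp₂.AT.symm),
            sp₁.Alt.trans sp₂.Alt.symm, ?_, ?_⟩
          · rw [sp₁.Aev, sp₂.Aev, heqv.evord_eq, hM]
          · intro e he
            rw [sp₁.AE] at he
            rw [sp₁.Alab e he, sp₂.Alab e (hM ▸ he)]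
            exact heqv.lab_eq e (Mset_subset_E P₁ he)
        have hQeqv : Eqv Q₁ Q₂ := by
          refine ⟨sp₁.QE.trans (heqv.E_eq.trans sp₂.QE.symm),
            sp₁.QS.trans (hM.trans sp₂.QS.symm),
            sp₁.QT.trans (heqv.T_eq.trans sp₂.QT.symm),
            sp₁.Qlt.trans (heqv.lt_eq.trans sp₂.Qlt.symm),
            sp₁.Qev.trans (heqv.evord_eq.trans sp₂.Qev.symm), ?_⟩
          · intro e he
            rw [sp₁.QE] at he
            rw [sp₁.Qlab e he, sp₂.Qlab e (heqv.E_eq ▸ he)]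
            exact heqv.lab_eq e he
        exact List.Forall₂.cons hAeqv.iso
          (ih (B₁ :: r₁) hlen' Q₁ Q₂ (B₂ :: r₂) hQeqv htail₁ htail₂)
      · -- starter vs terminator: contradiction
        have sp₁ := peelStarter hg₁ hA₁st hQl₁ hB₁te (terminator_proper hB₁te hB₁ns)
        have tp₂ := peelTerminator hg₂ hA₂te hQl₂ hB₂st (starter_proper hB₂st hB₂nt)
        exact absurd (kindMix heqv sp₁ (starter_proper hA₁st hA₁nt) tp₂
          (terminator_proper hA₂te hA₂ns)) (fun h => h)
      · -- terminator vs starter: contradiction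
        have tp₁ := peelTerminator hg₁ hA₁te hQl₁ hB₁st (starter_proper hB₁st hB₁nt)
        have sp₂ := peelStarter hg₂ hA₂st hQl₂ hB₂te (terminator_proper hB₂te hB₂ns)
        exact absurd (kindMix heqv.symm sp₂ (starter_proper hA₂st hA₂nt) tp₁
          (terminator_proper hA₁te hA₁ns)) (fun h => h)
      · -- both terminators
        have tp₁ := peelTerminator hg₁ hA₁te hQl₁ hB₁st (starter_proper hB₁st hB₁nt)
        have tp₂ := peelTerminator hg₂ hA₂te hQl₂ hB₂st (starter_proper hB₂st hB₂nt)
        have hSF : P₁.S \ F0 P₁ = P₂.S \ F0 P₂ := by rw [heqv.S_eq, hF]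
        have hEF : P₁.E \ F0 P₁ = P₂.E \ F0 P₂ := by rw [heqv.E_eq, hF]
        have hAeqv : Eqv A₁ A₂ := by
          refine ⟨tp₁.AE.trans (heqv.S_eq.trans tp₂.AE.symm),
            tp₁.AS.trans (heqv.S_eq.trans tp₂.AS.symm),
            tp₁.AT.trans (hSF.trans tp₂.AT.symm),
            tp₁.Alt.trans tp₂.Alt.symm, ?_, ?_⟩
          · rw [tp₁.Aev, tp₂.Aev, heqv.evord_eq, heqv.S_eq]
          · intro e he
            rw [tp₁.AE] at he
            rw [tp₁.Alab e he, tp₂.Alab e (heqv.S_eq ▸ he)]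
            exact heqv.lab_eq e (P₁.S_sub he)
        have hQeqv : Eqv Q₁ Q₂ := by
          refine ⟨tp₁.QE.trans (hEF.trans tp₂.QE.symm),
            tp₁.QS.trans (hSF.trans tp₂.QS.symm),
            tp₁.QT.trans (heqv.T_eq.trans tp₂.QT.symm), ?_, ?_, ?_⟩
          · rw [tp₁.Qlt, tp₂.Qlt, heqv.lt_eq, hEF]
          · rw [tp₁.Qev, tp₂.Qev, heqv.evord_eq, hEF]
          · intro e he
            rw [tp₁.QE] at he
            rw [tp₁.Qlab e he, tp₂.Qlab e (hEF ▸ he)]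
            exact heqv.lab_eq e (Finset.mem_sdiff.mp he).1
        exact List.Forall₂.cons hAeqv.iso
          (ih (B₁ :: r₁) hlen' Q₁ Q₂ (B₂ :: r₂) hQeqv htail₁ htail₂)

end SparseAux

namespace SparseAux

open Ipomset Relation

variable {Λ : Type}

/-- The starter on the minimal events of `P`. -/
noncomputable def upStep (P : Ipomset Λ) : Ipomset Λ where
  E := Mset P
  lt := fun _ _ => False
  evord := rres P.evord (Mset P)
  S := P.S
  T := Mset P
  lab := P.lab
  S_sub := S_subset_Mset P
  T_sub := Finset.Subset.refl _
  lt_dom := fun _ _ h => h.elim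
  evord_dom := fun _ _ h => ⟨h.2.1, h.2.2⟩
  lt_irrefl := fun _ h => h
  lt_trans := fun _ _ _ h => h.elim
  evord_irrefl := fun e h => P.evord_irrefl e h.1
  evord_asymm := fun a b h h' => P.evord_asymm a b h.1 h'.1
  lt_evord := fun _ _ h => h.elim
  total := fun a ha b hb hne => by
    rcases P.total a (Mset_subset_E P ha) b (Mset_subset_E P hb) hne with h | h | h | h
    · exact absurd h ((mem_Mset.mp hb).2 a)
    · exact absurd h ((mem_Mset.mp ha).2 b)
    · exact Or.inr (Or.inr (Or.inl ⟨h, ha, hb⟩))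
    · exact Or.inr (Or.inr (Or.inr ⟨h, hb, ha⟩))
  S_min := fun _ _ _ h => h
  T_max := fun _ _ _ h => h

/-- `P` with all minimal events declared sources. -/
noncomputable def relaxS (P : Ipomset Λ) : Ipomset Λ :=
  { P with
    S := Mset P
    S_sub := Mset_subset_E P
    S_min := fun e he e' => (mem_Mset.mp he).2 e' }

/-- The terminator on the sources of `P`, terminating `F0 P`. -/
noncomputable def downStep (P : Ipomset Λ) : Ipomset Λ where
  E := P.S
  lt := fun _ _ => False
  evord := rres P.evord P.S
  S := P.S
  T := P.S \ F0 P
  lab := P.lab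
  S_sub := Finset.Subset.refl _
  T_sub := Finset.sdiff_subset
  lt_dom := fun _ _ h => h.elim
  evord_dom := fun _ _ h => ⟨h.2.1, h.2.2⟩
  lt_irrefl := fun _ h => h
  lt_trans := fun _ _ _ h => h.elim
  evord_irrefl := fun e h => P.evord_irrefl e h.1
  evord_asymm := fun a b h h' => P.evord_asymm a b h.1 h'.1
  lt_evord := fun _ _ h => h.elim
  total := fun a ha b hb hne => by
    rcases P.total a (P.S_sub ha) b (P.S_sub hb) hne with h | h | h | h
    · exact absurd h (P.S_min b hb a)
    · exact absurd h (P.S_min a ha b)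
    · exact Or.inr (Or.inr (Or.inl ⟨h, ha, hb⟩))
    · exact Or.inr (Or.inr (Or.inr ⟨h, hb, ha⟩))
  S_min := fun _ _ _ h => h
  T_max := fun _ _ _ h => h

/-- `P` with the events of `F0 P` removed. -/
noncomputable def dropF (P : Ipomset Λ) : Ipomset Λ where
  E := P.E \ F0 P
  lt := rres P.lt (P.E \ F0 P)
  evord := rres P.evord (P.E \ F0 P)
  S := P.S \ F0 P
  T := P.T \ F0 P
  lab := P.lab
  S_sub := Finset.sdiff_subset_sdiff P.S_sub (Finset.Subset.refl _)
  T_sub := Finset.sdiff_subset_sdiff P.T_sub (Finset.Subset.refl _)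
  lt_dom := fun _ _ h => ⟨h.2.1, h.2.2⟩
  evord_dom := fun _ _ h => ⟨h.2.1, h.2.2⟩
  lt_irrefl := fun e h => P.lt_irrefl e h.1
  lt_trans := fun a b c h h' => ⟨P.lt_trans a b c h.1 h'.1, h.2.1, h'.2.2⟩
  evord_irrefl := fun e h => P.evord_irrefl e h.1
  evord_asymm := fun a b h h' => P.evord_asymm a b h.1 h'.1
  lt_evord := fun a b h =>
    ⟨fun h' => (P.lt_evord a b h.1).1 h'.1, fun h' => (P.lt_evord a b h.1).2 h'.1⟩
  total := fun a ha b hb hne => by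
    obtain ⟨haE, -⟩ := Finset.mem_sdiff.mp ha
    obtain ⟨hbE, -⟩ := Finset.mem_sdiff.mp hb
    rcases P.total a haE b hbE hne with h | h | h | h
    · exact Or.inl ⟨h, ha, hb⟩
    · exact Or.inr (Or.inl ⟨h, hb, ha⟩)
    · exact Or.inr (Or.inr (Or.inl ⟨h, ha, hb⟩))
    · exact Or.inr (Or.inr (Or.inr ⟨h, hb, ha⟩))
  S_min := fun e he e' h => P.S_min e (Finset.mem_sdiff.mp he).1 e' h.1
  T_max := fun e he e' h => P.T_max e (Finset.mem_sdiff.mp he).1 e' h.1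

lemma upStep_isStarter (P : Ipomset Λ) : (upStep P).IsStarter :=
  ⟨fun _ _ h => h, rfl⟩

lemma downStep_isTerminator (P : Ipomset Λ) : (downStep P).IsTerminator :=
  ⟨fun _ _ h => h, rfl⟩

lemma glue2 (P : Ipomset Λ) : IsGluing (upStep P) (relaxS P) P where
  match_TS := rfl
  inter := fun _ he _ => he
  evord_agree := fun a ha b hb =>
    ⟨fun h => h.1, fun h => ⟨h, ha, hb⟩⟩
  lab_agree := fun _ _ => rfl
  E_eq := (Finset.union_eq_right.mpr (Mset_subset_E P)).symm
  S_eq := rfl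
  T_eq := rfl
  lab_P := fun _ _ => rfl
  lab_Q := fun _ _ => rfl
  evord_eq := fun a b =>
    ⟨fun h => Or.inr h, fun h => h.elim (fun h' => h'.1) id⟩
  lt_eq := fun a b => by
    refine (transGen_iff_of ?_ (fun x y z h h' => P.lt_trans x y z h h')).symm
    intro x y
    constructor
    · rintro (h | h | ⟨h1, h2, _, _⟩)
      · exact h.elim
      · exact h
      · exact absurd h1 h2
    · intro h; exact Or.inr (Or.inl h)

lemma glue3 (P : Ipomset Λ) (hT : ∀ e ∈ F0 P, e ∉ P.T) :
    IsGluing (downStep P) (dropF P) P where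
  match_TS := rfl
  inter := fun e he h2 => Finset.mem_sdiff.mpr ⟨he, (Finset.mem_sdiff.mp h2).2⟩
  evord_agree := fun a ha b hb => by
    obtain ⟨haS, haF⟩ := Finset.mem_sdiff.mp ha
    obtain ⟨hbS, hbF⟩ := Finset.mem_sdiff.mp hb
    exact ⟨fun h => ⟨h.1, Finset.mem_sdiff.mpr ⟨P.S_sub haS, haF⟩,
        Finset.mem_sdiff.mpr ⟨P.S_sub hbS, hbF⟩⟩,
      fun h => ⟨h.1, haS, hbS⟩⟩
  lab_agree := fun _ _ => rfl
  E_eq := by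
    apply Finset.Subset.antisymm
    · intro x hx
      by_cases hxF : x ∈ F0 P
      · exact Finset.mem_union_left _ (F0_subset_S P hxF)
      · exact Finset.mem_union_right _ (Finset.mem_sdiff.mpr ⟨hx, hxF⟩)
    · exact Finset.union_subset P.S_sub Finset.sdiff_subset
  S_eq := rfl
  T_eq := by
    apply Finset.Subset.antisymm
    · intro x hx
      exact Finset.mem_sdiff.mpr ⟨hx, fun h => hT x h hx⟩
    · exact Finset.sdiff_subset.trans (Finset.Subset.refl _)
  lab_P := fun _ _ => rfl
  lab_Q := fun _ _ => rfl
  evord_eq := fun a b => by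
    constructor
    · intro h
      have ha := (P.evord_dom a b h).1
      have hb := (P.evord_dom a b h).2
      by_cases haF : a ∈ F0 P
      · have hbS : b ∈ P.S := by
          by_contra hbS
          exact (P.lt_evord a b ((mem_F0.mp haF).2 b hb hbS)).1 h
        exact Or.inl ⟨h, F0_subset_S P haF, hbS⟩
      · by_cases hbF : b ∈ F0 P
        · have haS : a ∈ P.S := by
            by_contra haS
            exact (P.lt_evord b a ((mem_F0.mp hbF).2 a ha haS)).2 h
          exact Or.inl ⟨h, haS, F0_subset_S P hbF⟩
        · exact Or.inr ⟨h, Finset.mem_sdiff.mpr ⟨ha, haF⟩, Finset.mem_sdiff.mpr ⟨hb, hbF⟩⟩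
    · rintro (⟨h, -, -⟩ | ⟨h, -, -⟩) <;> exact h
  lt_eq := fun a b => by
    refine (transGen_iff_of ?_ (fun x y z h h' => P.lt_trans x y z h h')).symm
    intro x y
    constructor
    · rintro (h | h | ⟨h1, h2, h3, h4⟩)
      · exact h.elim
      · exact h.1
      · -- x ∈ P.S, x ∉ P.S \ F0, y ∈ P.E \ F0, y ∉ P.S \ F0
        have hxF : x ∈ F0 P := by
          by_contra hxF
          exact h2 (Finset.mem_sdiff.mpr ⟨h1, hxF⟩)
        have hyS : y ∉ P.S := fun hyS =>
          h4 (Finset.mem_sdiff.mpr ⟨hyS, (Finset.mem_sdiff.mp h3).2⟩)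
        exact (mem_F0.mp hxF).2 y (Finset.mem_sdiff.mp h3).1 hyS
    · intro h
      have hx := (P.lt_dom x y h).1
      have hy := (P.lt_dom x y h).2
      have hyS : y ∉ P.S := fun hyS => P.S_min y hyS x h
      have hyF : y ∉ F0 P := fun hyF => hyS (F0_subset_S P hyF)
      by_cases hxF : x ∈ F0 P
      · refine Or.inr (Or.inr ⟨F0_subset_S P hxF, ?_, Finset.mem_sdiff.mpr ⟨hy, hyF⟩, ?_⟩)
        · intro hmem; exact (Finset.mem_sdiff.mp hmem).2 hxF
        · intro hmem; exact hyS (Finset.mem_sdiff.mp hmem).1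
      · exact Or.inr (Or.inl ⟨h, Finset.mem_sdiff.mpr ⟨hx, hxF⟩,
          Finset.mem_sdiff.mpr ⟨hy, hyF⟩⟩)

end SparseAux

namespace SparseAux

open Ipomset

variable {Λ : Type}

lemma relaxS_interval {P : Ipomset Λ} (hI : P.Interval) : (relaxS P).Interval := hI

lemma dropF_interval {P : Ipomset Λ} (hI : P.Interval) : (dropF P).Interval := by
  obtain ⟨f, g, hfg, hiff⟩ := hI
  refine ⟨f, g, fun e he => hfg e (Finset.mem_sdiff.mp he).1, ?_⟩
  intro e₁ h₁ e₂ h₂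
  constructor
  · intro h; exact (hiff e₁ (Finset.mem_sdiff.mp h₁).1 e₂ (Finset.mem_sdiff.mp h₂).1).mp h.1
  · intro h
    exact ⟨(hiff e₁ (Finset.mem_sdiff.mp h₁).1 e₂ (Finset.mem_sdiff.mp h₂).1).mpr h, h₁, h₂⟩

lemma F0_nonempty {P : Ipomset Λ} (hI : P.Interval) (hSM : P.S = Mset P)
    (hSE : P.S ≠ P.E) : (F0 P).Nonempty := by
  obtain ⟨f, g, hfg, hiff⟩ := hI
  have hEne : P.E.Nonempty := by
    obtain ⟨x, hx, -⟩ := Finset.exists_of_ssubset (lt_of_le_of_ne P.S_sub hSE)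
    exact ⟨x, hx⟩
  obtain ⟨e, heE, hmin⟩ := P.E.exists_min_image g hEne
  refine ⟨e, mem_F0.mpr ⟨?_, ?_⟩⟩
  · rw [hSM]
    refine mem_Mset.mpr ⟨heE, fun x hx => ?_⟩
    have hxE : x ∈ P.E := (P.lt_dom x e hx).1
    have h1 : g x < f e := (hiff x hxE e heE).mp hx
    have h2 : g e ≤ g x := hmin x hxE
    have h3 : f e ≤ g e := hfg e heE
    linarith
  · intro e' he' hns
    have he'M : e' ∉ Mset P := fun h => hns (hSM ▸ h)
    have : ¬ ∀ x, ¬ P.lt x e' := fun h => he'M (mem_Mset.mpr ⟨he', h⟩)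
    obtain ⟨x, hx⟩ := not_forall.mp this
    have hx : P.lt x e' := not_not.mp hx
    have hxE : x ∈ P.E := (P.lt_dom x e' hx).1
    have h1 : g x < f e' := (hiff x hxE e' he').mp hx
    have h2 : g e ≤ g x := hmin x hxE
    exact (hiff e heE e' he').mpr (by linarith)

lemma dropF_S_ne_E {P : Ipomset Λ} (hSE : P.S ≠ P.E) : (dropF P).S ≠ (dropF P).E := by
  intro h
  have h' : P.S \ F0 P = P.E \ F0 P := h
  apply hSE
  apply Finset.Subset.antisymm P.S_sub
  intro x hx
  by_cases hxF : x ∈ F0 P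
  · exact F0_subset_S P hxF
  · have hmem : x ∈ P.E \ F0 P := Finset.mem_sdiff.mpr ⟨hx, hxF⟩
    rw [← h'] at hmem
    exact (Finset.mem_sdiff.mp hmem).1

lemma afterDrop {P : Ipomset Λ} (hI : P.Interval) (hSM : P.S = Mset P)
    (hSE : P.S ≠ P.E) : (dropF P).S ⊂ Mset (dropF P) := by
  refine lt_of_le_of_ne (S_subset_Mset _) ?_
  intro hSM'
  obtain ⟨e, he⟩ := F0_nonempty (dropF_interval hI) hSM' (dropF_S_ne_E hSE)
  obtain ⟨heS', hlt'⟩ := mem_F0.mp he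
  have heS : e ∈ P.S \ F0 P := heS'
  have heF : e ∈ F0 P := by
    refine mem_F0.mpr ⟨(Finset.mem_sdiff.mp heS).1, ?_⟩
    intro e' he' hns
    have he'F : e' ∉ F0 P := fun h => hns (F0_subset_S P h)
    have he'E' : e' ∈ (dropF P).E := Finset.mem_sdiff.mpr ⟨he', he'F⟩
    have he'S' : e' ∉ (dropF P).S := fun h => hns (Finset.mem_sdiff.mp h).1
    exact (hlt' e' he'E' he'S').1
  exact (Finset.mem_sdiff.mp heS).2 heF

lemma F0_not_T {P : Ipomset Λ} (hSE : P.S ≠ P.E) : ∀ e ∈ F0 P, e ∉ P.T := by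
  intro e he heT
  obtain ⟨x, hxE, hxS⟩ := Finset.exists_of_ssubset (lt_of_le_of_ne P.S_sub hSE)
  exact P.T_max e heT x ((mem_F0.mp he).2 x hxE hxS)

end SparseAux

namespace SparseAux

open Ipomset

variable {Λ : Type}

lemma relaxS_E (P : Ipomset Λ) : (relaxS P).E = P.E := rfl
lemma relaxS_S (P : Ipomset Λ) : (relaxS P).S = Mset P := rfl
lemma relaxS_T (P : Ipomset Λ) : (relaxS P).T = P.T := rfl
lemma dropF_E (P : Ipomset Λ) : (dropF P).E = P.E \ F0 P := rfl
lemma dropF_S (P : Ipomset Λ) : (dropF P).S = P.S \ F0 P := rfl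
lemma dropF_T (P : Ipomset Λ) : (dropF P).T = P.T \ F0 P := rfl

/-- Target of the existence induction. -/
def ExGoal (P : Ipomset Λ) : Prop :=
  ∃ H r, IsSparseDecomp (H :: r) P ∧
    (H.IsTerminator ↔ (P.S = Mset P ∧ ¬(P.Discrete ∧ P.T = P.E ∧ P.S ≠ P.E))) ∧
    (¬P.IsId → (H.IsStarter ↔ (P.S ⊂ Mset P ∨ (P.Discrete ∧ P.T = P.E))))

lemma existsBase {P : Ipomset Λ} (hd : P.Discrete) (hST : P.T = P.E ∨ P.S = P.E) :
    ExGoal P := by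
  have hM : Mset P = P.E := Mset_eq_of_discrete hd
  refine ⟨P, [], ⟨⟨List.cons_ne_nil _ _, ?_, .single P⟩, List.isChain_singleton P⟩, ?_, ?_⟩
  · intro Q hQ
    rw [List.mem_singleton] at hQ
    subst hQ
    rcases hST with h | h
    · exact Or.inl ⟨hd, h⟩
    · exact Or.inr ⟨hd, h⟩
  · constructor
    · intro h
      refine ⟨by rw [hM]; exact h.2, ?_⟩
      rintro ⟨-, -, hSE⟩
      exact hSE h.2
    · rintro ⟨h1, h2⟩
      refine ⟨hd, ?_⟩
      rcases hST with hTE | hSE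
      · by_contra hSE
        exact h2 ⟨hd, hTE, hSE⟩
      · exact hSE
  · intro _
    constructor
    · intro h; exact Or.inr ⟨hd, h.2⟩
    · rintro (h | ⟨-, hTE⟩)
      · rcases hST with hTE | hSE
        · exact ⟨hd, hTE⟩
        · rw [hM] at h
          exact absurd hSE h.ne
      · exact ⟨hd, hTE⟩

lemma existsMain (n : ℕ) : ∀ P : Ipomset Λ, P.Interval →
    (P.E \ P.S).card + (P.E \ P.T).card ≤ n → ExGoal P := by
  induction n with
  | zero =>
    intro P hI hle
    have c1 : (P.E \ P.S).card = 0 := by omega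
    have h1 : P.E ⊆ P.S := by
      intro x hx
      by_contra h
      have hmem : x ∈ P.E \ P.S := Finset.mem_sdiff.mpr ⟨hx, h⟩
      rw [Finset.card_eq_zero.mp c1] at hmem
      exact Finset.notMem_empty x hmem
    have hSE : P.S = P.E := Finset.Subset.antisymm P.S_sub h1
    have hd : P.Discrete := fun a b hab =>
      P.S_min b (hSE ▸ (P.lt_dom a b hab).2) a hab
    exact existsBase hd (Or.inr hSE)
  | succ n ih =>
    intro P hI hle
    by_cases hbase : P.Discrete ∧ (P.T = P.E ∨ P.S = P.E)
    · exact existsBase hbase.1 hbase.2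
    · by_cases hSM : P.S = Mset P
      · -- peel a terminator
        have hSE : P.S ≠ P.E := by
          intro h
          exact hbase ⟨discrete_of_Mset_eq (hSM.symm.trans h), Or.inr h⟩
        have hF0 := F0_nonempty hI hSM hSE
        have hT := F0_not_T hSE
        have hglue := glue3 P hT
        have e1 : (dropF P).E \ (dropF P).S = P.E \ P.S := by
          rw [dropF_E, dropF_S]
          ext x
          simp only [Finset.mem_sdiff, not_and, not_not]
          constructor
          · rintro ⟨⟨hE, hF⟩, h⟩
            exact ⟨hE, fun hS => hF (h hS)⟩
          · rintro ⟨hE, hS⟩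
            exact ⟨⟨hE, fun hF => hS (F0_subset_S P hF)⟩, fun hS' => absurd hS' hS⟩
        have e2 : (dropF P).E \ (dropF P).T = (P.E \ P.T) \ F0 P := by
          rw [dropF_E, dropF_T]
          ext x
          simp only [Finset.mem_sdiff, not_and, not_not]
          constructor
          · rintro ⟨⟨hE, hF⟩, h⟩
            exact ⟨⟨hE, fun hTm => hF (h hTm)⟩, hF⟩
          · rintro ⟨⟨hE, hTm⟩, hF⟩
            exact ⟨⟨hE, hF⟩, fun hTm' => absurd hTm' hTm⟩
        have hss : (P.E \ P.T) \ F0 P ⊂ P.E \ P.T := by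
          obtain ⟨e, he⟩ := hF0
          refine (Finset.ssubset_iff_of_subset Finset.sdiff_subset).mpr
            ⟨e, Finset.mem_sdiff.mpr ⟨P.S_sub (F0_subset_S P he), hT e he⟩, ?_⟩
          intro hmem
          exact (Finset.mem_sdiff.mp hmem).2 he
        have hmeas : ((dropF P).E \ (dropF P).S).card +
            ((dropF P).E \ (dropF P).T).card ≤ n := by
          rw [e1, e2]
          have := Finset.card_lt_card hss
          omega
        obtain ⟨H, r, hsp, hte', hst'⟩ := ih (dropF P) (dropF_interval hI) hmeas
        have hdnst : ¬ (downStep P).IsStarter := by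
          intro h
          have h2 : P.S \ F0 P = P.S := h.2
          obtain ⟨e, he⟩ := hF0
          have heS : e ∈ P.S := F0_subset_S P he
          rw [← h2] at heS
          exact (Finset.mem_sdiff.mp heS).2 he
        refine ⟨downStep P, H :: r,
          ⟨⟨List.cons_ne_nil _ _, ?_, .cons hsp.1.2.2 hglue⟩, ?_⟩, ?_, ?_⟩
        · intro X hX
          rcases List.mem_cons.mp hX with h | h
          · subst h; exact Or.inr (downStep_isTerminator P)
          · exact hsp.1.2.1 X h
        · refine List.isChain_cons_cons.mpr ⟨⟨?_, ?_⟩, hsp.2⟩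
          · rintro ⟨hds, -⟩
            exact hdnst hds
          · rintro ⟨-, hHte⟩
            exact (afterDrop hI hSM hSE).ne (hte'.mp hHte).1
        · exact iff_of_true (downStep_isTerminator P)
            ⟨hSM, fun ⟨hd, _, _⟩ => hSE (hSM.trans (Mset_eq_of_discrete hd))⟩
        · intro _
          refine iff_of_false hdnst ?_
          rintro (h | ⟨hd, -⟩)
          · exact h.ne hSM
          · exact hSE (hSM.trans (Mset_eq_of_discrete hd))
      · -- peel a starter
        have hMr : Mset (relaxS P) = Mset P := Mset_congr rfl rfl
        have hssM : P.S ⊂ Mset P := lt_of_le_of_ne (S_subset_Mset P) hSM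
        have hmeas : ((relaxS P).E \ (relaxS P).S).card +
            ((relaxS P).E \ (relaxS P).T).card ≤ n := by
          rw [relaxS_E, relaxS_S, relaxS_T]
          obtain ⟨x, hxM, hxS⟩ := Finset.exists_of_ssubset hssM
          have hsub : P.E \ Mset P ⊆ P.E \ P.S :=
            Finset.sdiff_subset_sdiff (Finset.Subset.refl _) (S_subset_Mset P)
          have hss : P.E \ Mset P ⊂ P.E \ P.S := by
            refine (Finset.ssubset_iff_of_subset hsub).mpr
              ⟨x, Finset.mem_sdiff.mpr ⟨Mset_subset_E P hxM, hxS⟩, ?_⟩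
            intro hmem
            exact (Finset.mem_sdiff.mp hmem).2 hxM
          have := Finset.card_lt_card hss
          omega
        have hnid : ¬ (relaxS P).IsId := by
          rintro ⟨hst, -⟩
          exact hbase ⟨hst.1, Or.inl hst.2⟩
        obtain ⟨H, r, hsp, hte', hst'⟩ := ih (relaxS P) (relaxS_interval hI) hmeas
        refine ⟨upStep P, H :: r,
          ⟨⟨List.cons_ne_nil _ _, ?_, .cons hsp.1.2.2 (glue2 P)⟩, ?_⟩, ?_, ?_⟩
        · intro X hX
          rcases List.mem_cons.mp hX with h | h
          · subst h; exact Or.inl (upStep_isStarter P)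
          · exact hsp.1.2.1 X h
        · refine List.isChain_cons_cons.mpr ⟨⟨?_, ?_⟩, hsp.2⟩
          · rintro ⟨-, hHst⟩
            rcases (hst' hnid).mp hHst with h | h
            · have := h.ne
              rw [relaxS_S, hMr] at this
              exact this rfl
            · exact hbase ⟨h.1, Or.inl h.2⟩
          · rintro ⟨hute, -⟩
            exact hSM hute.2
        · exact iff_of_false (fun h => hSM h.2) (fun h => hSM h.1)
        · intro _
          exact iff_of_true (upStep_isStarter P) (Or.inl hssM)

end SparseAux
/-- Every interval ipomset with interfaces has a sparse step
decomposition, and it is unique (up to pointwise isomorphism of the steps). -/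
theorem unique_sparse_step_decomposition {Λ : Type} (P : Ipomset Λ) (hP : P.Interval) :
    (∃ l : List (Ipomset Λ), IsSparseDecomp l P) ∧
    (∀ l₁ l₂ : List (Ipomset Λ), IsSparseDecomp l₁ P → IsSparseDecomp l₂ P →
      List.Forall₂ Ipomset.Isomorphic l₁ l₂) := by
  constructor
  · obtain ⟨H, r, hsp, -, -⟩ :=
      SparseAux.existsMain ((P.E \ P.S).card + (P.E \ P.T).card) P hP le_rfl
    exact ⟨H :: r, hsp⟩
  · intro l₁ l₂ h₁ h₂
    exact SparseAux.uniq l₁.length l₁ le_rfl P P l₂ (SparseAux.Eqv.refl P) h₁ h₂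
end

section
/- Any regular language of interval ipomsets has finite width: if L = L(H) for a finite higher-dimensional automaton H, then sup{wid(P) : P ∈ L} is finite (bounded by the dimension of H). -/
/-! In a gluing `P * Q` every event of `P` outside its target interface precedes every event
of `Q` outside its source interface, so an antichain of `P * Q` lies entirely in `P` or entirely
in `Q`. Hence an antichain of the event ipomset of a path lies in a single starter or
terminator, whose events are enumerated by the conclist of a cell of `H`; that conclist has
length at most `dim H`. -/

set_option autoImplicit false

namespace IsGluing

variable {Λ : Type} {P Q R : Ipomset Λ}

lemma lt_of_lt_right (hg : IsGluing P Q R) {a b : ℕ} (h : Q.lt a b) : R.lt a b :=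
  (hg.lt_eq a b).mpr (.single (Or.inr (Or.inl h)))

lemma lt_of_not_target_of_not_source (hg : IsGluing P Q R) {a b : ℕ}
    (ha : a ∈ P.E) (haT : a ∉ P.T) (hb : b ∈ Q.E) (hbS : b ∉ Q.S) : R.lt a b :=
  (hg.lt_eq a b).mpr (.single (Or.inr (Or.inr ⟨ha, haT, hb, hbS⟩)))

lemma subset_right_of_antichain (hg : IsGluing P Q R) {A : Finset ℕ} (hAR : A ⊆ R.E)
    (hanti : ∀ a ∈ A, ∀ b ∈ A, ¬ R.lt a b) (hAP : ¬ A ⊆ P.E) : A ⊆ Q.E := by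
  have mem_Q_of_not_mem_P : ∀ e ∈ A, e ∉ P.E → e ∈ Q.E := fun e he heP => by
    simpa [hg.E_eq, heP] using hAR he
  obtain ⟨b, hbA, hbP⟩ := Finset.not_subset.mp hAP
  have hbS : b ∉ Q.S := fun h => hbP (P.T_sub (hg.match_TS ▸ h))
  intro a haA
  by_contra haQ
  have haP : a ∈ P.E := by simpa [hg.E_eq, haQ] using hAR haA
  have haT : a ∉ P.T := fun h => haQ (Q.S_sub (hg.match_TS ▸ h))
  exact hanti a haA b hbA
    (hg.lt_of_not_target_of_not_source haP haT (mem_Q_of_not_mem_P b hbA hbP) hbS)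

end IsGluing

lemma IsGluingList.exists_subset_of_antichain {Λ : Type} {l : List (Ipomset Λ)}
    {P : Ipomset Λ} (hl : IsGluingList l P) {A : Finset ℕ} (hAP : A ⊆ P.E)
    (hanti : ∀ a ∈ A, ∀ b ∈ A, ¬ P.lt a b) : ∃ D ∈ l, A ⊆ D.E := by
  induction hl with
  | single P => exact ⟨P, List.mem_singleton_self _, hAP⟩
  | @cons P Q R l _ hg ih =>
    by_cases hA : A ⊆ P.E
    · exact ⟨P, List.mem_cons_self, hA⟩
    · obtain ⟨D, hD, hAD⟩ := ih (hg.subset_right_of_antichain hAP hanti hA)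
        (fun a ha b hb hab => hanti a ha b hb (hg.lt_of_lt_right hab))
      exact ⟨D, List.mem_cons_of_mem _ hD, hAD⟩

lemma IsGluingList.width_le {Λ : Type} {l : List (Ipomset Λ)} {P : Ipomset Λ}
    (hl : IsGluingList l P) {k : ℕ} (hk : ∀ D ∈ l, D.E.card ≤ k) : P.width ≤ k := by
  refine csSup_le' ?_
  rintro n ⟨A, hAP, hanti, rfl⟩
  obtain ⟨D, hD, hAD⟩ := hl.exists_subset_of_antichain hAP hanti
  exact (Finset.card_le_card hAD).trans (hk D hD)

lemma LetterMatches.card_E {Λ : Type} {s : StepLetter Λ} {D : Ipomset Λ}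
    (h : LetterMatches s D) : D.E.card = s.U.length := by
  obtain ⟨-, g, ⟨hbij, -, -⟩, -⟩ := h
  rw [← Set.ncard_coe_finset, ← hbij.image_eq, hbij.injOn.ncard_image,
    ← Finset.coe_range, Set.ncard_coe_finset, Finset.card_range]

lemma List.Forall₂.exists_of_mem_right {α β : Type} {R : α → β → Prop} {l₁ : List α}
    {l₂ : List β} (h : List.Forall₂ R l₁ l₂) {b : β} (hb : b ∈ l₂) : ∃ a ∈ l₁, R a b := by
  induction h with
  | nil => simp at hb
  | cons hr _ ih =>
    rcases List.mem_cons.mp hb with rfl | hb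
    · exact ⟨_, List.mem_cons_self, hr⟩
    · obtain ⟨a, ha, hra⟩ := ih hb
      exact ⟨a, List.mem_cons_of_mem _ ha, hra⟩

namespace HDA

variable {Λ : Type} {H : HDA Λ}

lemma Path.exists_cell_of_mem {q p : H.Cell} {w : List (StepLetter Λ)} (hp : H.Path q p w)
    {s : StepLetter Λ} (hs : s ∈ w) : ∃ c : H.Cell, s.U = H.ev c := by
  induction hp with
  | nil q => exact ⟨q, by rw [List.mem_singleton.mp hs]⟩
  | up r _ _ _ ih | down r _ _ _ ih =>
    rcases List.mem_cons.mp hs with rfl | hs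
    · exact ⟨r, rfl⟩
    · exact ih hs

lemma length_ev_le_dim (c : H.Cell) : (H.ev c).length ≤ H.dim :=
  letI := H.fin
  Finset.le_sup (f := fun q => (H.ev q).length) (Finset.mem_univ c)

end HDA

theorem regular_finite_width_general {Λ : Type} (H : HDA Λ) :
    ∀ P ∈ H.Lang, P.width ≤ H.dim := by
  rintro P ⟨q, p, w, -, -, hpath, l, hletters, hglue⟩
  refine hglue.width_le fun D hD => ?_
  obtain ⟨s, hs, hmatch⟩ := hletters.exists_of_mem_right hD
  obtain ⟨c, hc⟩ := hpath.exists_cell_of_mem hs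
  rw [hmatch.card_E, hc]
  exact H.length_ev_le_dim c

/-- Any regular language has finite width, bounded by the dimension of
any HDA recognising it. -/
theorem regular_finite_width {Λ : Type} [Fintype Λ] (H : HDA Λ) :
    ∀ P ∈ H.Lang, P.width ≤ H.dim :=
  regular_finite_width_general H
end

section
/- Let w = P₁⋯Pₙ be a coherent word over Ω_{≤k} with gluing P = P₁ * ⋯ * Pₙ, and for each position ℓ and each i ≤ |Pₗ| let evt(ℓ,i) ∈ P denote the i-th event of Pₗ in ⇝-order, viewed as an event of P. Let ∼ be the equivalence relation on pairs (position, index) generated by: (ℓ,i) ∼ (ℓ+1,j) whenever the event evt(ℓ,i) ∈ T_{Pₗ} is identified with evt(ℓ+1,j) ∈ S_{Pₗ₊₁} by the gluing. Then for all pairs, (ℓ₁,i) ∼ (ℓ₂,j) if and only if evt(ℓ₁,i) = evt(ℓ₂,j) as events of P. -/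
set_option autoImplicit false

/-- Membership in the gluing of a list is membership in some step. -/
lemma mem_glueList {Λ : Type} {l : List (Ipomset Λ)} {P : Ipomset Λ}
    (hl : IsGluingList l P) (e : ℕ) :
    e ∈ P.E ↔ ∃ ℓ : Fin l.length, e ∈ (l.get ℓ).E := by
  induction hl with
  | single Q =>
    constructor
    · intro h; exact ⟨⟨0, by simp⟩, h⟩
    · rintro ⟨ℓ, h⟩
      have : ℓ = ⟨0, by simp⟩ := by
        apply Fin.ext; have := ℓ.isLt; simpa using Nat.lt_one_iff.mp (by simpa using this)
      rwa [this] at h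
  | @cons A Q R l' hQ hg ih =>
    rw [hg.E_eq]
    constructor
    · intro h
      rcases Finset.mem_union.mp h with h | h
      · exact ⟨⟨0, by simp⟩, h⟩
      · rcases ih.mp h with ⟨ℓ, hℓ⟩
        exact ⟨ℓ.succ, by simpa using hℓ⟩
    · rintro ⟨ℓ, hℓ⟩
      rcases Fin.eq_zero_or_eq_succ ℓ with rfl | ⟨m, rfl⟩
      · exact Finset.mem_union_left _ hℓ
      · exact Finset.mem_union_right _ (ih.mpr ⟨m, by simpa using hℓ⟩)

/-- The sources of the gluing of a list are the sources of its head. -/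
lemma glueList_S {Λ : Type} {l : List (Ipomset Λ)} {P : Ipomset Λ}
    (hl : IsGluingList l P) (h : 0 < l.length) :
    P.S = (l.get ⟨0, h⟩).S := by
  induction hl with
  | single Q => rfl
  | @cons A Q R l' hQ hg ih => exact hg.S_eq

/-- If an event belongs to two steps, it is a target of the earlier one and a source of
the step just after it. -/
lemma step_mem {Λ : Type} : ∀ {l : List (Ipomset Λ)} {P : Ipomset Λ},
    IsGluingList l P →
    ∀ (ℓ ℓ' : Fin l.length) (e : ℕ), (ℓ : ℕ) < (ℓ' : ℕ) →
      e ∈ (l.get ℓ).E → e ∈ (l.get ℓ').E →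
      e ∈ (l.get ℓ).T ∧ ∀ (h : (ℓ : ℕ) + 1 < l.length), e ∈ (l.get ⟨(ℓ : ℕ) + 1, h⟩).S := by
  intro l P hl
  induction hl with
  | single Q =>
    intro ℓ ℓ' e hlt _ _
    exact absurd hlt (by
      have h1 := ℓ.isLt; have h2 := ℓ'.isLt
      simp only [List.length_cons, List.length_nil] at h1 h2; omega)
  | @cons A Q R l' hQ hg ih =>
    intro ℓ ℓ' e hlt hE hE'
    rcases Fin.eq_zero_or_eq_succ ℓ with rfl | ⟨m, rfl⟩
    · -- ℓ = 0, so the event is in A and in Q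
      rcases Fin.eq_zero_or_eq_succ ℓ' with rfl | ⟨m', rfl⟩
      · simp at hlt
      · have hAE : e ∈ A.E := hE
        have hQE : e ∈ Q.E := (mem_glueList hQ e).mpr ⟨m', by simpa using hE'⟩
        have hT : e ∈ A.T := hg.inter e hAE hQE
        have hlen : 0 < l'.length := by
          have := m'.isLt; omega
        have hS : e ∈ (l'.get ⟨0, hlen⟩).S := by
          rw [← glueList_S hQ hlen, ← hg.match_TS]; exact hT
        refine ⟨hT, ?_⟩
        intro h
        exact hS
    · -- ℓ = m + 1 : both steps are in the tail
      rcases Fin.eq_zero_or_eq_succ ℓ' with rfl | ⟨m', rfl⟩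
      · simp at hlt
      · have hlt' : (m : ℕ) < (m' : ℕ) := by simpa using hlt
        have hEm : e ∈ (l'.get m).E := by simpa using hE
        have hEm' : e ∈ (l'.get m').E := by simpa using hE'
        obtain ⟨hT, hS⟩ := ih m m' e hlt' hEm hEm'
        refine ⟨by simpa using hT, ?_⟩
        intro h
        have h' : (m : ℕ) + 1 < l'.length := by simpa using h
        exact hS h'

/-- Let `l` be a coherent word of starters/terminators gluing to `P`,
and let `g ℓ` enumerate the events of the `ℓ`-th letter in event order (so
`evt(ℓ,i) = g ℓ i`).  The equivalence relation generated by identifying, at consecutive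
positions, a target event of one step with the corresponding source event of the next
relates `(ℓ₁,i)` and `(ℓ₂,j)` if and only if they denote the same event of `P`. -/
theorem evt_equivalence {Λ : Type} (l : List (Ipomset Λ)) (P : Ipomset Λ)
    (hl : IsGluingList l P)
    (hsteps : ∀ Q ∈ l, Q.IsStarter ∨ Q.IsTerminator)
    (g : Fin l.length → ℕ → ℕ)
    (hg : ∀ ℓ : Fin l.length,
      Set.BijOn (g ℓ) (Set.Iio (l.get ℓ).E.card) ↑(l.get ℓ).E ∧
      (∀ i j : ℕ, i < j → j < (l.get ℓ).E.card → (l.get ℓ).evord (g ℓ i) (g ℓ j))) :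
    ∀ (ℓ₁ ℓ₂ : Fin l.length) (i j : ℕ),
      i < (l.get ℓ₁).E.card → j < (l.get ℓ₂).E.card →
      (Relation.EqvGen
          (fun p q : Fin l.length × ℕ =>
            (q.1 : ℕ) = (p.1 : ℕ) + 1 ∧
            p.2 < (l.get p.1).E.card ∧ q.2 < (l.get q.1).E.card ∧
            g p.1 p.2 ∈ (l.get p.1).T ∧ g q.1 q.2 ∈ (l.get q.1).S ∧
            g p.1 p.2 = g q.1 q.2)
          (ℓ₁, i) (ℓ₂, j)
        ↔ g ℓ₁ i = g ℓ₂ j) := by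
  set R := fun p q : Fin l.length × ℕ =>
      (q.1 : ℕ) = (p.1 : ℕ) + 1 ∧
      p.2 < (l.get p.1).E.card ∧ q.2 < (l.get q.1).E.card ∧
      g p.1 p.2 ∈ (l.get p.1).T ∧ g q.1 q.2 ∈ (l.get q.1).S ∧
      g p.1 p.2 = g q.1 q.2 with hR
  -- membership of enumerated events
  have hmem : ∀ (ℓ : Fin l.length) (i : ℕ), i < (l.get ℓ).E.card → g ℓ i ∈ (l.get ℓ).E := by
    intro ℓ i hi
    exact (hg ℓ).1.mapsTo hi
  -- main chain lemma
  have chain : ∀ (n : ℕ) (ℓ₁ ℓ₂ : Fin l.length) (i j : ℕ),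
      (ℓ₂ : ℕ) = (ℓ₁ : ℕ) + n →
      i < (l.get ℓ₁).E.card → j < (l.get ℓ₂).E.card →
      g ℓ₁ i = g ℓ₂ j → Relation.EqvGen R (ℓ₁, i) (ℓ₂, j) := by
    intro n
    induction n with
    | zero =>
      intro ℓ₁ ℓ₂ i j hn hi hj he
      have hℓ : ℓ₁ = ℓ₂ := Fin.ext (by omega)
      subst hℓ
      have : i = j := (hg ℓ₁).1.injOn (Set.mem_Iio.mpr hi) (Set.mem_Iio.mpr hj) he
      subst this
      exact Relation.EqvGen.refl _
    | succ n ih =>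
      intro ℓ₁ ℓ₂ i j hn hi hj he
      have hlt : (ℓ₁ : ℕ) < (ℓ₂ : ℕ) := by omega
      have hE₁ : g ℓ₁ i ∈ (l.get ℓ₁).E := hmem ℓ₁ i hi
      have hE₂ : g ℓ₁ i ∈ (l.get ℓ₂).E := he ▸ hmem ℓ₂ j hj
      obtain ⟨hT, hS⟩ := step_mem hl ℓ₁ ℓ₂ (g ℓ₁ i) hlt hE₁ hE₂
      have hlen : (ℓ₁ : ℕ) + 1 < l.length := by
        have := ℓ₂.isLt; omega
      set ℓ' : Fin l.length := ⟨(ℓ₁ : ℕ) + 1, hlen⟩ with hℓ'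
      have hS' : g ℓ₁ i ∈ (l.get ℓ').S := hS hlen
      have hE' : g ℓ₁ i ∈ (l.get ℓ').E := (l.get ℓ').S_sub hS'
      obtain ⟨i', hi', hgi'⟩ := (hg ℓ').1.surjOn (by exact_mod_cast hE')
      have hi'lt : i' < (l.get ℓ').E.card := Set.mem_Iio.mp hi'
      have hbase : R (ℓ₁, i) (ℓ', i') := by
        refine ⟨rfl, hi, hi'lt, hT, ?_, hgi'.symm⟩
        rw [hgi']; exact hS'
      have hrest : Relation.EqvGen R (ℓ', i') (ℓ₂, j) := by
        apply ih ℓ' ℓ₂ i' j (by simp [hℓ']; omega) hi'lt hj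
        rw [hgi']; exact he
      exact Relation.EqvGen.trans _ _ _ (Relation.EqvGen.rel _ _ hbase) hrest
  intro ℓ₁ ℓ₂ i j hi hj
  constructor
  · intro h
    have fwd : ∀ p q : Fin l.length × ℕ, Relation.EqvGen R p q → g p.1 p.2 = g q.1 q.2 := by
      intro p q h
      induction h with
      | rel p q hpq => exact hpq.2.2.2.2.2
      | refl => rfl
      | symm _ _ _ ihh => exact ihh.symm
      | trans _ _ _ _ _ ih1 ih2 => exact ih1.trans ih2
    exact fwd _ _ h
  · intro he
    rcases le_or_gt (ℓ₁ : ℕ) (ℓ₂ : ℕ) with hle | hlt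
    · exact chain ((ℓ₂ : ℕ) - (ℓ₁ : ℕ)) ℓ₁ ℓ₂ i j (by omega) hi hj he
    · exact Relation.EqvGen.symm _ _
        (chain ((ℓ₁ : ℕ) - (ℓ₂ : ℕ)) ℓ₂ ℓ₁ j i (by omega) hj hi he.symm)
end

section
/- For all f, g ∈ {St, Te} and ⋈ ∈ {=, <, >} there is an MSO formula φ(x, y) over ipomsets such that for every interval ipomset P and all events x, y of P, P ⊨ φ(x, y) if and only if f(x) ⋈ g(y) holds for the indices in the sparse step decomposition of P; moreover there are MSO formulas defining min(f(x)) (f(x) = 1, the first step) and max(f(x)) (f(x) = n, the last step). -/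
set_option autoImplicit false

/-! In a step decomposition every event occupies a contiguous block of steps, from `firstStep`
to `lastStep`, and `x < y` holds exactly when `x` is terminated, `y` is started and the block of
`x` ends before that of `y` begins. In a sparse decomposition starters and terminators alternate,
so every step next to the one starting an event terminates some event, and every step next to
the one terminating an event starts some event. These witnesses turn each comparison of `St`
and `Te` indices into a first-order property of `<`, `s` and `t`: for instance
`St(x) < St(y)` iff `y` is not a source and either `x` is a source or some event precedes `y`
but not `x`. Equality is the conjunction of two negated strict comparisons. -/

variable {Λ : Type}

def stepsContaining (l : List (Ipomset Λ)) (e : ℕ) : Set ℕ :=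
  {i | ∃ h : i < l.length, e ∈ l[i].E}

-- `firstStep` and `lastStep` count from `0`, while `StIdx` and `TeIdx` count from `1`.
noncomputable def firstStep (l : List (Ipomset Λ)) (e : ℕ) : ℕ := sInf (stepsContaining l e)

noncomputable def lastStep (l : List (Ipomset Λ)) (e : ℕ) : ℕ := sSup (stepsContaining l e)

def StartsAt (l : List (Ipomset Λ)) (e i : ℕ) : Prop :=
  ∃ h : i < l.length, e ∈ l[i].E ∧ e ∉ l[i].S

def EndsAt (l : List (Ipomset Λ)) (e i : ℕ) : Prop :=
  ∃ h : i < l.length, e ∈ l[i].E ∧ e ∉ l[i].T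

theorem startsAt_cons_succ {Q : Ipomset Λ} {l : List (Ipomset Λ)} {e i : ℕ} :
    StartsAt (Q :: l) e (i + 1) ↔ StartsAt l e i := by
  simp [StartsAt]

theorem endsAt_cons_succ {Q : Ipomset Λ} {l : List (Ipomset Λ)} {e i : ℕ} :
    EndsAt (Q :: l) e (i + 1) ↔ EndsAt l e i := by
  simp [EndsAt]

theorem firstStep_le {l : List (Ipomset Λ)} {e i : ℕ} (h : i ∈ stepsContaining l e) :
    firstStep l e ≤ i :=
  Nat.sInf_le h

theorem bddAbove_stepsContaining (l : List (Ipomset Λ)) (e : ℕ) :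
    BddAbove (stepsContaining l e) :=
  ⟨l.length, fun _ hi => hi.1.le⟩

theorem le_lastStep {l : List (Ipomset Λ)} {e i : ℕ} (h : i ∈ stepsContaining l e) :
    i ≤ lastStep l e :=
  le_csSup (bddAbove_stepsContaining l e) h

theorem Alternating.not_isStarter_and_isStarter {l : List (Ipomset Λ)} (halt : Alternating l)
    {i : ℕ} (h : i + 1 < l.length) : ¬(l[i].IsStarter ∧ l[i + 1].IsStarter) :=
  (List.isChain_iff_getElem.1 halt i h).1

theorem Alternating.not_isTerminator_and_isTerminator {l : List (Ipomset Λ)}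
    (halt : Alternating l) {i : ℕ} (h : i + 1 < l.length) :
    ¬(l[i].IsTerminator ∧ l[i + 1].IsTerminator) :=
  (List.isChain_iff_getElem.1 halt i h).2

namespace IsGluingList

variable {l : List (Ipomset Λ)} {P : Ipomset Λ} {e i j : ℕ}

theorem ne_nil (hg : IsGluingList l P) : l ≠ [] := by
  cases hg <;> simp

theorem length_pos (hg : IsGluingList l P) : 0 < l.length :=
  List.length_pos_iff.2 hg.ne_nil

theorem mem_E_iff_exists (hg : IsGluingList l P) : e ∈ P.E ↔ ∃ Q ∈ l, e ∈ Q.E := by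
  induction hg with
  | single P => simp
  | cons _ hglue ih => simp [hglue.E_eq, ih]

theorem mem_E_iff (hg : IsGluingList l P) : e ∈ P.E ↔ (stepsContaining l e).Nonempty := by
  rw [hg.mem_E_iff_exists, List.exists_mem_iff_getElem]
  rfl

theorem S_eq (hg : IsGluingList l P) : P.S = (l[0]'hg.length_pos).S := by
  cases hg with
  | single P => rfl
  | cons _ hglue => exact hglue.S_eq

theorem T_eq_getLast (hg : IsGluingList l P) : P.T = (l.getLast hg.ne_nil).T := by
  induction hg with
  | single P => rfl
  | cons hgl hglue ih => rw [hglue.T_eq, ih, List.getLast_cons hgl.ne_nil]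

theorem T_eq (hg : IsGluingList l P) :
    P.T = (l[l.length - 1]'(Nat.sub_lt hg.length_pos one_pos)).T := by
  rw [hg.T_eq_getLast, List.getLast_eq_getElem]

theorem T_eq_S_succ (hg : IsGluingList l P) (h : i + 1 < l.length) : l[i].T = l[i + 1].S := by
  induction hg generalizing i with
  | single P => simp at h
  | cons hgl hglue ih =>
    cases i with
    | zero => simpa [hglue.match_TS] using hgl.S_eq
    | succ i => simpa using ih (by simpa using h)

theorem mem_T_of_lt (hg : IsGluingList l P) (hij : i < j) (hj : j < l.length)
    (hi : e ∈ l[i].E) (hj' : e ∈ l[j].E) : e ∈ l[i].T := by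
  induction hg generalizing i j with
  | single P => simp only [List.length_singleton] at hj; omega
  | cons hgl hglue ih =>
    cases j with
    | zero => omega
    | succ j =>
    cases i with
    | zero => exact hglue.inter e hi (hgl.mem_E_iff_exists.2 ⟨_, List.getElem_mem _, hj'⟩)
    | succ i =>
      simpa using ih (show i < j by omega) (by simpa using hj) (by simpa using hi)
        (by simpa using hj')

theorem mem_E_of_le_of_le {k : ℕ} (hg : IsGluingList l P) (hik : i ≤ k) (hkj : k ≤ j)
    (hj : j < l.length) (hi : e ∈ l[i].E) (hj' : e ∈ l[j].E) : e ∈ l[k].E := by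
  induction k, hik using Nat.le_induction with
  | base => exact hi
  | succ k hik ih =>
    have hk : e ∈ l[k].T := hg.mem_T_of_lt (by omega) hj (ih (by omega) hi) hj'
    rw [hg.T_eq_S_succ (by omega)] at hk
    exact l[k + 1].S_sub hk

theorem mem_S_of_lt (hg : IsGluingList l P) (hij : i < j) (hj : j < l.length)
    (hi : e ∈ l[i].E) (hj' : e ∈ l[j].E) : e ∈ l[j].S := by
  obtain ⟨k, rfl⟩ : ∃ k, j = k + 1 := ⟨j - 1, by omega⟩
  rw [← hg.T_eq_S_succ]
  exact hg.mem_T_of_lt k.lt_succ_self hj (hg.mem_E_of_le_of_le (by omega) (by omega) hj hi hj') hj'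

theorem firstStep_mem (hg : IsGluingList l P) (he : e ∈ P.E) :
    firstStep l e ∈ stepsContaining l e :=
  Nat.sInf_mem (hg.mem_E_iff.1 he)

theorem lastStep_mem (hg : IsGluingList l P) (he : e ∈ P.E) :
    lastStep l e ∈ stepsContaining l e :=
  Nat.sSup_mem (hg.mem_E_iff.1 he) (bddAbove_stepsContaining l e)

theorem firstStep_lt_length (hg : IsGluingList l P) (he : e ∈ P.E) : firstStep l e < l.length :=
  (hg.firstStep_mem he).1

theorem lastStep_lt_length (hg : IsGluingList l P) (he : e ∈ P.E) : lastStep l e < l.length :=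
  (hg.lastStep_mem he).1

theorem firstStep_le_lastStep (hg : IsGluingList l P) (he : e ∈ P.E) :
    firstStep l e ≤ lastStep l e :=
  firstStep_le (hg.lastStep_mem he)

theorem mem_E_of_startsAt (hg : IsGluingList l P) (h : StartsAt l e i) : e ∈ P.E :=
  hg.mem_E_iff.2 ⟨i, h.1, h.2.1⟩

theorem mem_E_of_endsAt (hg : IsGluingList l P) (h : EndsAt l e i) : e ∈ P.E :=
  hg.mem_E_iff.2 ⟨i, h.1, h.2.1⟩

theorem startsAt_iff (hg : IsGluingList l P) (he : e ∈ P.E) :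
    StartsAt l e i ↔ i = firstStep l e ∧ e ∉ P.S := by
  constructor
  · rintro ⟨hi, hiE, hiS⟩
    have hfirst : ∀ k (hk : k < i), e ∉ (l[k]'(hk.trans hi)).E :=
      fun k hk hkE => hiS (hg.mem_S_of_lt hk hi hkE hiE)
    refine ⟨le_antisymm ?_ (firstStep_le ⟨hi, hiE⟩), fun hS => ?_⟩
    · obtain ⟨hf, hfE⟩ := hg.firstStep_mem he
      exact not_lt.1 fun h => hfirst _ h hfE
    · rw [hg.S_eq] at hS
      rcases Nat.eq_zero_or_pos i with rfl | hi0
      · exact hiS hS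
      · exact hfirst 0 hi0 (Ipomset.S_sub _ hS)
  · rintro ⟨rfl, hS⟩
    obtain ⟨hi, hiE⟩ := hg.firstStep_mem he
    refine ⟨hi, hiE, fun hiS => ?_⟩
    rcases h : firstStep l e with _ | k
    · simp only [h] at hiS
      exact hS (hg.S_eq ▸ hiS)
    · simp only [h, ← hg.T_eq_S_succ] at hiS
      have := firstStep_le ⟨_, l[k].T_sub hiS⟩
      omega

theorem endsAt_iff (hg : IsGluingList l P) (he : e ∈ P.E) :
    EndsAt l e i ↔ i = lastStep l e ∧ e ∉ P.T := by
  constructor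
  · rintro ⟨hi, hiE, hiT⟩
    have hlast : ∀ k (hk : k < l.length), i < k → e ∉ l[k].E :=
      fun k hk hik hkE => hiT (hg.mem_T_of_lt hik hk hiE hkE)
    refine ⟨le_antisymm (le_lastStep ⟨hi, hiE⟩) ?_, fun hT => ?_⟩
    · obtain ⟨hl, hlE⟩ := hg.lastStep_mem he
      exact not_lt.1 fun h => hlast _ hl h hlE
    · rw [hg.T_eq] at hT
      rcases (Nat.le_sub_one_of_lt hi).eq_or_lt with rfl | hi'
      · exact hiT hT
      · exact hlast _ _ hi' (Ipomset.T_sub _ hT)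
  · rintro ⟨rfl, hT⟩
    obtain ⟨hi, hiE⟩ := hg.lastStep_mem he
    refine ⟨hi, hiE, fun hiT => ?_⟩
    rcases (Nat.le_sub_one_of_lt hi).eq_or_lt with h | h
    · simp only [h] at hiT
      exact hT (hg.T_eq ▸ hiT)
    · rw [hg.T_eq_S_succ (by omega)] at hiT
      have := le_lastStep ⟨_, Ipomset.S_sub _ hiT⟩
      omega

theorem startsAt_firstStep (hg : IsGluingList l P) (he : e ∈ P.E) (hS : e ∉ P.S) :
    StartsAt l e (firstStep l e) :=
  (hg.startsAt_iff he).2 ⟨rfl, hS⟩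

theorem endsAt_lastStep (hg : IsGluingList l P) (he : e ∈ P.E) (hT : e ∉ P.T) :
    EndsAt l e (lastStep l e) :=
  (hg.endsAt_iff he).2 ⟨rfl, hT⟩

theorem le_of_startsAt_of_endsAt (hg : IsGluingList l P) (hs : StartsAt l e j)
    (he : EndsAt l e i) : j ≤ i :=
  not_lt.1 fun hij => he.2.2 (hg.mem_T_of_lt hij hs.1 he.2.1 hs.2.1)

theorem lt_iff_exists_endsAt_startsAt (hg : IsGluingList l P) (hd : ∀ Q ∈ l, Q.Discrete)
    {a b : ℕ} : P.lt a b ↔ ∃ i j, i < j ∧ EndsAt l a i ∧ StartsAt l b j := by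
  induction hg generalizing a b with
  | single P =>
    refine iff_of_false (hd P (by simp) a b) ?_
    rintro ⟨i, j, hij, -, hj, -⟩
    simp only [List.length_singleton] at hj
    omega
  | cons hgl hglue ih =>
    rename_i P₀ Q R ls
    have hd₀ : P₀.Discrete := hd P₀ List.mem_cons_self
    have ihQ := fun {a b} => ih (a := a) (b := b) fun Q' h => hd Q' (List.mem_cons_of_mem _ h)
    have hR := IsGluingList.cons hgl hglue
    rw [hglue.lt_eq]
    constructor
    · have hbase : ∀ u v, glueBase P₀ Q u v →
          ∃ i j, i < j ∧ EndsAt (P₀ :: ls) u i ∧ StartsAt (P₀ :: ls) v j := by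
        rintro u v (h | h | ⟨huE, huT, hvE, hvS⟩)
        · exact absurd h (hd₀ u v)
        · obtain ⟨i, j, hij, hi, hj⟩ := ihQ.1 h
          exact ⟨i + 1, j + 1, by omega, endsAt_cons_succ.2 hi, startsAt_cons_succ.2 hj⟩
        · exact ⟨0, firstStep ls v + 1, by omega, ⟨by simp, huE, huT⟩,
            startsAt_cons_succ.2 (hgl.startsAt_firstStep hvE hvS)⟩
      intro h
      induction h with
      | single h => exact hbase _ _ h
      | tail _ h ih' =>
        obtain ⟨i, j, hij, hi, hj⟩ := ih'
        obtain ⟨i', j', hij', hi', hj'⟩ := hbase _ _ h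
        exact ⟨i, j', by have := hR.le_of_startsAt_of_endsAt hj hi'; omega, hi, hj'⟩
    · rintro ⟨i, _ | j, hij, hi, hj⟩
      · omega
      rw [startsAt_cons_succ] at hj
      apply Relation.TransGen.single
      cases i with
      | zero =>
        obtain ⟨-, hbS⟩ := (hgl.startsAt_iff (hgl.mem_E_of_startsAt hj)).1 hj
        exact Or.inr (Or.inr ⟨hi.2.1, hi.2.2, hgl.mem_E_of_startsAt hj, hbS⟩)
      | succ i => exact Or.inr (Or.inl (ihQ.2 ⟨i, j, by omega, endsAt_cons_succ.1 hi, hj⟩))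

theorem lt_iff_lastStep_lt_firstStep (hg : IsGluingList l P) (hd : ∀ Q ∈ l, Q.Discrete)
    {a b : ℕ} (ha : a ∈ P.E) (hb : b ∈ P.E) :
    P.lt a b ↔ a ∉ P.T ∧ b ∉ P.S ∧ lastStep l a < firstStep l b := by
  simp only [hg.lt_iff_exists_endsAt_startsAt hd, hg.endsAt_iff ha, hg.startsAt_iff hb]
  constructor
  · rintro ⟨i, j, hij, ⟨rfl, haT⟩, rfl, hbS⟩
    exact ⟨haT, hbS, hij⟩
  · rintro ⟨haT, hbS, h⟩
    exact ⟨_, _, h, ⟨rfl, haT⟩, rfl, hbS⟩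

end IsGluingList

namespace IsStepDecomp

variable {l : List (Ipomset Λ)} {P : Ipomset Λ} {x y : ℕ}

theorem isGluingList (hs : IsStepDecomp l P) : IsGluingList l P := hs.2.2

theorem discrete (hs : IsStepDecomp l P) : ∀ Q ∈ l, Q.Discrete :=
  fun Q hQ => (hs.2.1 Q hQ).elim And.left And.left

theorem not_startsAt_and_endsAt (hs : IsStepDecomp l P) {i : ℕ} (hx : StartsAt l x i)
    (hy : EndsAt l y i) : False := by
  obtain ⟨hi, hxE, hxS⟩ := hx
  obtain ⟨_, hyE, hyT⟩ := hy
  rcases hs.2.1 _ (List.getElem_mem hi) with h | h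
  · exact hyT (h.2 ▸ hyE)
  · exact hxS (h.2 ▸ hxE)

theorem firstStep_ne_lastStep (hs : IsStepDecomp l P) (hx : x ∈ P.E) (hxS : x ∉ P.S)
    (hy : y ∈ P.E) (hyT : y ∉ P.T) : firstStep l x ≠ lastStep l y := fun h =>
  hs.not_startsAt_and_endsAt (hs.isGluingList.startsAt_firstStep hx hxS)
    (h ▸ hs.isGluingList.endsAt_lastStep hy hyT)

theorem lt_iff (hs : IsStepDecomp l P) (hx : x ∈ P.E) (hy : y ∈ P.E) :
    P.lt x y ↔ x ∉ P.T ∧ y ∉ P.S ∧ lastStep l x < firstStep l y :=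
  hs.isGluingList.lt_iff_lastStep_lt_firstStep hs.discrete hx hy

end IsStepDecomp

namespace IsSparseDecomp

variable {l : List (Ipomset Λ)} {P : Ipomset Λ} {x y : ℕ}

theorem isStepDecomp (hl : IsSparseDecomp l P) : IsStepDecomp l P := hl.1

theorem isGluingList (hl : IsSparseDecomp l P) : IsGluingList l P := hl.1.2.2

theorem exists_endsAt_of_startsAt (hl : IsSparseDecomp l P) {i j : ℕ} (hx : StartsAt l x i)
    (hj : j < l.length) (hadj : j + 1 = i ∨ i + 1 = j) : ∃ z, EndsAt l z j := by
  obtain ⟨⟨-, hkind, -⟩, halt⟩ := hl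
  obtain ⟨hi, hxE, hxS⟩ := hx
  have hstart : l[i].IsStarter :=
    (hkind _ (List.getElem_mem hi)).resolve_right fun h => hxS (h.2 ▸ hxE)
  have hnstart : ¬ l[j].IsStarter := by
    rcases hadj with rfl | rfl
    · exact fun h => halt.not_isStarter_and_isStarter hi ⟨h, hstart⟩
    · exact fun h => halt.not_isStarter_and_isStarter hj ⟨hstart, h⟩
  have hterm := (hkind _ (List.getElem_mem hj)).resolve_left hnstart
  obtain ⟨z, hzE, hzT⟩ := Finset.exists_of_ssubset
    (l[j].T_sub.ssubset_of_ne fun h => hnstart ⟨hterm.1, h⟩)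
  exact ⟨z, hj, hzE, hzT⟩

theorem exists_startsAt_of_endsAt (hl : IsSparseDecomp l P) {i j : ℕ} (hx : EndsAt l x i)
    (hj : j < l.length) (hadj : j + 1 = i ∨ i + 1 = j) : ∃ z, StartsAt l z j := by
  obtain ⟨⟨-, hkind, -⟩, halt⟩ := hl
  obtain ⟨hi, hxE, hxT⟩ := hx
  have hterm : l[i].IsTerminator :=
    (hkind _ (List.getElem_mem hi)).resolve_left fun h => hxT (h.2 ▸ hxE)
  have hnterm : ¬ l[j].IsTerminator := by
    rcases hadj with rfl | rfl
    · exact fun h => halt.not_isTerminator_and_isTerminator hi ⟨h, hterm⟩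
    · exact fun h => halt.not_isTerminator_and_isTerminator hj ⟨hterm, h⟩
  have hstart := (hkind _ (List.getElem_mem hj)).resolve_right hnterm
  obtain ⟨z, hzE, hzS⟩ := Finset.exists_of_ssubset
    (l[j].S_sub.ssubset_of_ne fun h => hnterm ⟨hstart.1, h⟩)
  exact ⟨z, hj, hzE, hzS⟩

end IsSparseDecomp

namespace IsSparseDecomp

variable {l : List (Ipomset Λ)} {P : Ipomset Λ} {x y : ℕ}

theorem exists_lastStep_eq_of_adjacent (hl : IsSparseDecomp l P) (hx : x ∈ P.E) (hxS : x ∉ P.S)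
    {j : ℕ} (hj : j < l.length) (hadj : j + 1 = firstStep l x ∨ firstStep l x + 1 = j) :
    ∃ z ∈ P.E, z ∉ P.T ∧ lastStep l z = j := by
  have hg := hl.isGluingList
  obtain ⟨z, hz⟩ := hl.exists_endsAt_of_startsAt (hg.startsAt_firstStep hx hxS) hj hadj
  have hzE := hg.mem_E_of_endsAt hz
  obtain ⟨rfl, hzT⟩ := (hg.endsAt_iff hzE).1 hz
  exact ⟨z, hzE, hzT, rfl⟩

theorem exists_firstStep_eq_of_adjacent (hl : IsSparseDecomp l P) (hx : x ∈ P.E) (hxT : x ∉ P.T)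
    {j : ℕ} (hj : j < l.length) (hadj : j + 1 = lastStep l x ∨ lastStep l x + 1 = j) :
    ∃ z ∈ P.E, z ∉ P.S ∧ firstStep l z = j := by
  have hg := hl.isGluingList
  obtain ⟨z, hz⟩ := hl.exists_startsAt_of_endsAt (hg.endsAt_lastStep hx hxT) hj hadj
  have hzE := hg.mem_E_of_startsAt hz
  obtain ⟨rfl, hzS⟩ := (hg.startsAt_iff hzE).1 hz
  exact ⟨z, hzE, hzS, rfl⟩

theorem firstStep_lt_firstStep_iff (hl : IsSparseDecomp l P) (hx : x ∈ P.E) (hy : y ∈ P.E)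
    (hxS : x ∉ P.S) (hyS : y ∉ P.S) :
    firstStep l x < firstStep l y ↔ ∃ z ∈ P.E, P.lt z y ∧ ¬ P.lt z x := by
  have hs := hl.isStepDecomp
  constructor
  · intro hxy
    have := hl.isGluingList.firstStep_lt_length hy
    obtain ⟨z, hzE, hzT, hz⟩ :=
      hl.exists_lastStep_eq_of_adjacent hx hxS (j := firstStep l x + 1) (by omega) (Or.inr rfl)
    have hne := hs.firstStep_ne_lastStep hy hyS hzE hzT
    refine ⟨z, hzE, (hs.lt_iff hzE hy).2 ⟨hzT, hyS, by omega⟩, fun hzx => ?_⟩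
    have := ((hs.lt_iff hzE hx).1 hzx).2.2
    omega
  · rintro ⟨z, hzE, hzy, hzx⟩
    obtain ⟨hzT, -, hzy⟩ := (hs.lt_iff hzE hy).1 hzy
    have : ¬ lastStep l z < firstStep l x := fun h => hzx ((hs.lt_iff hzE hx).2 ⟨hzT, hxS, h⟩)
    omega

theorem lastStep_lt_lastStep_iff (hl : IsSparseDecomp l P) (hx : x ∈ P.E) (hy : y ∈ P.E)
    (hxT : x ∉ P.T) (hyT : y ∉ P.T) :
    lastStep l x < lastStep l y ↔ ∃ z ∈ P.E, P.lt x z ∧ ¬ P.lt y z := by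
  have hs := hl.isStepDecomp
  constructor
  · intro hxy
    have := hl.isGluingList.lastStep_lt_length hy
    obtain ⟨z, hzE, hzS, hz⟩ :=
      hl.exists_firstStep_eq_of_adjacent hx hxT (j := lastStep l x + 1) (by omega) (Or.inr rfl)
    have hne := hs.firstStep_ne_lastStep hzE hzS hy hyT
    refine ⟨z, hzE, (hs.lt_iff hx hzE).2 ⟨hxT, hzS, by omega⟩, fun hyz => ?_⟩
    have := ((hs.lt_iff hy hzE).1 hyz).2.2
    omega
  · rintro ⟨z, hzE, hxz, hyz⟩
    obtain ⟨-, hzS, hxz⟩ := (hs.lt_iff hx hzE).1 hxz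
    have : ¬ lastStep l y < firstStep l z := fun h => hyz ((hs.lt_iff hy hzE).2 ⟨hyT, hzS, h⟩)
    omega

theorem firstStep_eq_zero_iff (hl : IsSparseDecomp l P) (hx : x ∈ P.E) (hxS : x ∉ P.S) :
    firstStep l x = 0 ↔ ∀ z ∈ P.E, ¬ P.lt z x := by
  have hs := hl.isStepDecomp
  constructor
  · intro h z hzE hzx
    have := ((hs.lt_iff hzE hx).1 hzx).2.2
    omega
  · intro h
    by_contra h0
    obtain ⟨z, hzE, hzT, hz⟩ := hl.exists_lastStep_eq_of_adjacent hx hxS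
      (j := firstStep l x - 1) (by have := hl.isGluingList.firstStep_lt_length hx; omega)
      (Or.inl (by omega))
    exact h z hzE ((hs.lt_iff hzE hx).2 ⟨hzT, hxS, by omega⟩)

theorem lastStep_add_one_eq_length_iff (hl : IsSparseDecomp l P) (hx : x ∈ P.E)
    (hxT : x ∉ P.T) : lastStep l x + 1 = l.length ↔ ∀ z ∈ P.E, ¬ P.lt x z := by
  have hs := hl.isStepDecomp
  constructor
  · intro h z hzE hxz
    have := ((hs.lt_iff hx hzE).1 hxz).2.2
    have := hl.isGluingList.firstStep_lt_length hzE
    omega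
  · intro h
    by_contra hn
    obtain ⟨z, hzE, hzS, hz⟩ := hl.exists_firstStep_eq_of_adjacent hx hxT
      (j := lastStep l x + 1) (by have := hl.isGluingList.lastStep_lt_length hx; omega)
      (Or.inr rfl)
    exact h z hzE ((hs.lt_iff hx hzE).2 ⟨hxT, hzS, by omega⟩)

theorem firstStep_add_one_eq_length_iff (hl : IsSparseDecomp l P) (hx : x ∈ P.E)
    (hxS : x ∉ P.S) :
    firstStep l x + 1 = l.length ↔ x ∈ P.T ∧ ∀ z ∈ P.E, z ∉ P.T → P.lt z x := by
  have hs := hl.isStepDecomp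
  have hg := hl.isGluingList
  constructor
  · intro h
    refine ⟨by_contra fun hxT => ?_, fun z hzE hzT => (hs.lt_iff hzE hx).2 ⟨hzT, hxS, ?_⟩⟩
    · have := hg.firstStep_le_lastStep hx
      have := hg.lastStep_lt_length hx
      exact hs.firstStep_ne_lastStep hx hxS hx hxT (by omega)
    · have := hs.firstStep_ne_lastStep hx hxS hzE hzT
      have := hg.lastStep_lt_length hzE
      omega
  · rintro ⟨-, h⟩
    by_contra hn
    obtain ⟨z, hzE, hzT, hz⟩ := hl.exists_lastStep_eq_of_adjacent hx hxS
      (j := firstStep l x + 1) (by have := hg.firstStep_lt_length hx; omega) (Or.inr rfl)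
    have := ((hs.lt_iff hzE hx).1 (h z hzE hzT)).2.2
    omega

theorem lastStep_eq_zero_iff (hl : IsSparseDecomp l P) (hx : x ∈ P.E) (hxT : x ∉ P.T) :
    lastStep l x = 0 ↔ x ∈ P.S ∧ ∀ z ∈ P.E, z ∉ P.S → P.lt x z := by
  have hs := hl.isStepDecomp
  have hg := hl.isGluingList
  constructor
  · intro h
    refine ⟨by_contra fun hxS => ?_, fun z hzE hzS => (hs.lt_iff hx hzE).2 ⟨hxT, hzS, ?_⟩⟩
    · have := hg.firstStep_le_lastStep hx
      exact hs.firstStep_ne_lastStep hx hxS hx hxT (by omega)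
    · have := hs.firstStep_ne_lastStep hzE hzS hx hxT
      omega
  · rintro ⟨-, h⟩
    by_contra h0
    obtain ⟨z, hzE, hzS, hz⟩ := hl.exists_firstStep_eq_of_adjacent hx hxT
      (j := lastStep l x - 1) (by have := hg.lastStep_lt_length hx; omega) (Or.inl (by omega))
    have := ((hs.lt_iff hx hzE).1 (h z hzE hzS)).2.2
    omega

end IsSparseDecomp

section Indices

variable {l : List (Ipomset Λ)} {P : Ipomset Λ} {e x y : ℕ}

theorem stIdx_of_mem_S (h : e ∈ P.S) : StIdx P l e = ⊥ := if_pos h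

theorem teIdx_of_mem_T (h : e ∈ P.T) : TeIdx P l e = ⊤ := if_pos h

theorem IsGluingList.stIdx_of_not_mem_S (hg : IsGluingList l P) (he : e ∈ P.E) (h : e ∉ P.S) :
    StIdx P l e = (firstStep l e + 1 : ℕ) := by
  rw [StIdx, if_neg h]
  obtain ⟨hf, hfE⟩ := hg.firstStep_mem he
  refine le_antisymm (sInf_le ⟨⟨_, hf⟩, hfE, by push_cast; rfl⟩) (le_sInf ?_)
  rintro _ ⟨i, hi, rfl⟩
  have : firstStep l e ≤ i := firstStep_le ⟨i.2, hi⟩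
  exact_mod_cast Nat.succ_le_succ this

theorem IsGluingList.teIdx_of_not_mem_T (hg : IsGluingList l P) (he : e ∈ P.E) (h : e ∉ P.T) :
    TeIdx P l e = (lastStep l e + 1 : ℕ) := by
  rw [TeIdx, if_neg h]
  obtain ⟨hf, hfE⟩ := hg.lastStep_mem he
  refine le_antisymm (sSup_le ?_) (le_sSup ⟨⟨_, hf⟩, hfE, by push_cast; rfl⟩)
  rintro _ ⟨i, hi, rfl⟩
  have : i ≤ lastStep l e := le_lastStep ⟨i.2, hi⟩
  exact_mod_cast Nat.succ_le_succ this

theorem IsSparseDecomp.stIdx_lt_stIdx_iff (hl : IsSparseDecomp l P) (hx : x ∈ P.E)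
    (hy : y ∈ P.E) : StIdx P l x < StIdx P l y ↔
      y ∉ P.S ∧ (x ∈ P.S ∨ ∃ z ∈ P.E, P.lt z y ∧ ¬ P.lt z x) := by
  have hg := hl.isGluingList
  by_cases hxS : x ∈ P.S <;> by_cases hyS : y ∈ P.S <;>
    simp [stIdx_of_mem_S, hg.stIdx_of_not_mem_S, hl.firstStep_lt_firstStep_iff, *,
      bot_lt_iff_ne_bot, EReal.natCast_ne_bot, -Nat.cast_add]

theorem IsSparseDecomp.teIdx_lt_teIdx_iff (hl : IsSparseDecomp l P) (hx : x ∈ P.E)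
    (hy : y ∈ P.E) : TeIdx P l x < TeIdx P l y ↔
      x ∉ P.T ∧ (y ∈ P.T ∨ ∃ z ∈ P.E, P.lt x z ∧ ¬ P.lt y z) := by
  have hg := hl.isGluingList
  by_cases hxT : x ∈ P.T <;> by_cases hyT : y ∈ P.T <;>
    simp [teIdx_of_mem_T, hg.teIdx_of_not_mem_T, hl.lastStep_lt_lastStep_iff, *,
      lt_top_iff_ne_top, EReal.natCast_ne_top, -Nat.cast_add]

theorem IsStepDecomp.teIdx_lt_stIdx_iff (hs : IsStepDecomp l P) (hx : x ∈ P.E)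
    (hy : y ∈ P.E) : TeIdx P l x < StIdx P l y ↔ P.lt x y := by
  have hg := hs.isGluingList
  by_cases hxT : x ∈ P.T
  · simpa [teIdx_of_mem_T hxT] using P.T_max x hxT y
  by_cases hyS : y ∈ P.S
  · simpa [stIdx_of_mem_S hyS] using P.S_min y hyS x
  simp [hg.teIdx_of_not_mem_T, hg.stIdx_of_not_mem_S, hs.lt_iff, *, -Nat.cast_add]

theorem IsStepDecomp.stIdx_lt_teIdx_iff (hs : IsStepDecomp l P) (hx : x ∈ P.E)
    (hy : y ∈ P.E) : StIdx P l x < TeIdx P l y ↔ ¬ P.lt y x := by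
  have hg := hs.isGluingList
  by_cases hxS : x ∈ P.S
  · have := P.S_min x hxS y
    by_cases hyT : y ∈ P.T <;>
      simp [stIdx_of_mem_S hxS, teIdx_of_mem_T, hg.teIdx_of_not_mem_T, bot_lt_iff_ne_bot,
        EReal.natCast_ne_bot, -Nat.cast_add, *]
  by_cases hyT : y ∈ P.T
  · simpa [teIdx_of_mem_T hyT, hg.stIdx_of_not_mem_S, lt_top_iff_ne_top, EReal.natCast_ne_top,
      -Nat.cast_add, *] using P.T_max y hyT x
  rw [hg.stIdx_of_not_mem_S hx hxS, hg.teIdx_of_not_mem_T hy hyT, Nat.cast_lt, hs.lt_iff hy hx]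
  have := hs.firstStep_ne_lastStep hx hxS hy hyT
  simp only [hxS, hyT, not_false_eq_true, true_and, not_lt]
  omega

theorem IsSparseDecomp.stIdx_eq_one_iff (hl : IsSparseDecomp l P) (hx : x ∈ P.E) :
    StIdx P l x = 1 ↔ x ∉ P.S ∧ ∀ z ∈ P.E, ¬ P.lt z x := by
  rw [← Nat.cast_one]
  by_cases hxS : x ∈ P.S
  · exact iff_of_false (stIdx_of_mem_S hxS ▸ (EReal.natCast_ne_bot 1).symm) fun h => h.1 hxS
  simp [hl.isGluingList.stIdx_of_not_mem_S, hl.firstStep_eq_zero_iff, -Nat.cast_add, *]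

theorem IsSparseDecomp.teIdx_eq_one_iff (hl : IsSparseDecomp l P) (hx : x ∈ P.E) :
    TeIdx P l x = 1 ↔ x ∈ P.S ∧ x ∉ P.T ∧ ∀ z ∈ P.E, z ∉ P.S → P.lt x z := by
  rw [← Nat.cast_one]
  by_cases hxT : x ∈ P.T
  · exact iff_of_false (teIdx_of_mem_T hxT ▸ (EReal.natCast_ne_top 1).symm) fun h => h.2.1 hxT
  simp [hl.isGluingList.teIdx_of_not_mem_T, hl.lastStep_eq_zero_iff, -Nat.cast_add, *]

theorem IsSparseDecomp.stIdx_eq_length_iff (hl : IsSparseDecomp l P) (hx : x ∈ P.E) :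
    StIdx P l x = l.length ↔
      x ∉ P.S ∧ x ∈ P.T ∧ ∀ z ∈ P.E, z ∉ P.T → P.lt z x := by
  by_cases hxS : x ∈ P.S
  · exact iff_of_false (stIdx_of_mem_S hxS ▸ (EReal.natCast_ne_bot _).symm) fun h => h.1 hxS
  simp [hl.isGluingList.stIdx_of_not_mem_S, hl.firstStep_add_one_eq_length_iff, -Nat.cast_add, *]

theorem IsSparseDecomp.teIdx_eq_length_iff (hl : IsSparseDecomp l P) (hx : x ∈ P.E) :
    TeIdx P l x = l.length ↔ x ∉ P.T ∧ ∀ z ∈ P.E, ¬ P.lt x z := by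
  by_cases hxT : x ∈ P.T
  · exact iff_of_false (teIdx_of_mem_T hxT ▸ (EReal.natCast_ne_top _).symm) fun h => h.1 hxT
  simp [hl.isGluingList.teIdx_of_not_mem_T, hl.lastStep_add_one_eq_length_iff, -Nat.cast_add, *]

end Indices

namespace MSO

variable {l : List (Ipomset Λ)} {P : Ipomset Λ} {f g : Bool} {x y z : ℕ}

def or (φ ψ : MSO Λ) : MSO Λ := .not (.and (.not φ) (.not ψ))

def all (z : ℕ) (φ : MSO Λ) : MSO Λ := .not (.exFO z (.not φ))

@[simp]
theorem sat_or {φ ψ : MSO Λ} {ν : ℕ → ℕ} {μ : ℕ → Set ℕ} :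
    Sat P (.or φ ψ) ν μ ↔ Sat P φ ν μ ∨ Sat P ψ ν μ := by
  simp only [MSO.or, Sat, not_and_or, not_not]

@[simp]
theorem sat_all {φ : MSO Λ} {ν : ℕ → ℕ} {μ : ℕ → Set ℕ} :
    Sat P (.all z φ) ν μ ↔ ∀ e ∈ P.E, Sat P φ (Function.update ν z e) μ := by
  simp only [all, Sat, not_exists, not_and, not_not]

def idxLt : Bool → Bool → ℕ → ℕ → ℕ → MSO Λ
  | true, true, x, y, z =>
    .and (.not (.src y)) (.or (.src x) (.exFO z (.and (.lt z y) (.not (.lt z x)))))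
  | false, false, x, y, z =>
    .and (.not (.tgt x)) (.or (.tgt y) (.exFO z (.and (.lt x z) (.not (.lt y z)))))
  | false, true, x, y, _ => .lt x y
  | true, false, x, y, _ => .not (.lt y x)

def idxEq (f g : Bool) (x y z : ℕ) : MSO Λ :=
  .and (.not (idxLt f g x y z)) (.not (idxLt g f y x z))

def idxFirst : Bool → ℕ → ℕ → MSO Λ
  | true, x, z => .and (.not (.src x)) (.all z (.not (.lt z x)))
  | false, x, z => .and (.src x) (.and (.not (.tgt x)) (.all z (.or (.src z) (.lt x z))))

def idxLast : Bool → ℕ → ℕ → MSO Λ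
  | true, x, z => .and (.not (.src x)) (.and (.tgt x) (.all z (.or (.tgt z) (.lt z x))))
  | false, x, z => .and (.not (.tgt x)) (.all z (.not (.lt x z)))

theorem fv1_idxLt : (idxLt f g x y z : MSO Λ).fv1 ⊆ {x, y} := by
  cases f <;> cases g <;> intro a <;> simp [idxLt, fv1, MSO.or] <;> tauto

theorem fv2_idxLt : (idxLt f g x y z : MSO Λ).fv2 = ∅ := by
  cases f <;> cases g <;> simp [idxLt, fv2, MSO.or]

theorem fv1_idxEq : (idxEq f g x y z : MSO Λ).fv1 ⊆ {x, y} :=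
  Finset.union_subset fv1_idxLt (fv1_idxLt.trans (Finset.pair_comm y x).subset)

theorem fv2_idxEq : (idxEq f g x y z : MSO Λ).fv2 = ∅ := by
  simp [idxEq, fv2, fv2_idxLt]

theorem fv1_idxFirst : (idxFirst f x z : MSO Λ).fv1 ⊆ {x} := by
  cases f <;> intro a <;> simp [idxFirst, fv1, MSO.or, all] <;> tauto

theorem fv2_idxFirst : (idxFirst f x z : MSO Λ).fv2 = ∅ := by
  cases f <;> simp [idxFirst, fv2, MSO.or, all]

theorem fv1_idxLast : (idxLast f x z : MSO Λ).fv1 ⊆ {x} := by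
  cases f <;> intro a <;> simp [idxLast, fv1, MSO.or, all] <;> tauto

theorem fv2_idxLast : (idxLast f x z : MSO Λ).fv2 = ∅ := by
  cases f <;> simp [idxLast, fv2, MSO.or, all]

theorem sat_idxLt_iff (hl : IsSparseDecomp l P) {ν : ℕ → ℕ} {μ : ℕ → Set ℕ}
    (hx : ν x ∈ P.E) (hy : ν y ∈ P.E) (hzx : z ≠ x) (hzy : z ≠ y) :
    Sat P (idxLt f g x y z) ν μ ↔ selIdx P l f (ν x) < selIdx P l g (ν y) := by
  cases f <;> cases g <;>
    simp [idxLt, selIdx, Sat, hzx.symm, hzy.symm,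
      hl.stIdx_lt_stIdx_iff hx hy, hl.teIdx_lt_teIdx_iff hx hy,
      hl.isStepDecomp.teIdx_lt_stIdx_iff hx hy, hl.isStepDecomp.stIdx_lt_teIdx_iff hx hy]

theorem sat_idxEq_iff (hl : IsSparseDecomp l P) {ν : ℕ → ℕ} {μ : ℕ → Set ℕ}
    (hx : ν x ∈ P.E) (hy : ν y ∈ P.E) (hzx : z ≠ x) (hzy : z ≠ y) :
    Sat P (idxEq f g x y z) ν μ ↔ selIdx P l f (ν x) = selIdx P l g (ν y) := by
  rw [idxEq, Sat, Sat, Sat, sat_idxLt_iff hl hx hy hzx hzy, sat_idxLt_iff hl hy hx hzy hzx,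
    not_lt, not_lt, le_antisymm_iff, and_comm]

theorem sat_idxFirst_iff (hl : IsSparseDecomp l P) {ν : ℕ → ℕ} {μ : ℕ → Set ℕ}
    (hx : ν x ∈ P.E) (hzx : z ≠ x) :
    Sat P (idxFirst f x z) ν μ ↔ selIdx P l f (ν x) = 1 := by
  cases f <;>
    simp [idxFirst, selIdx, Sat, hzx.symm, hl.stIdx_eq_one_iff hx,
      hl.teIdx_eq_one_iff hx, or_iff_not_imp_left]

theorem sat_idxLast_iff (hl : IsSparseDecomp l P) {ν : ℕ → ℕ} {μ : ℕ → Set ℕ}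
    (hx : ν x ∈ P.E) (hzx : z ≠ x) :
    Sat P (idxLast f x z) ν μ ↔ selIdx P l f (ν x) = l.length := by
  cases f <;>
    simp [idxLast, selIdx, Sat, hzx.symm, hl.stIdx_eq_length_iff hx,
      hl.teIdx_eq_length_iff hx, or_iff_not_imp_left]

end MSO

theorem st_te_comparisons_mso_definable_general {Λ : Type} (f g : Bool)
    (bow : EReal → EReal → Prop)
    (hbow : bow = (· = ·) ∨ bow = (· < ·) ∨ bow = (· > ·)) :
    (∃ φ : MSO Λ, φ.fv1 ⊆ {0, 1} ∧ φ.fv2 = ∅ ∧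
      ∀ P : Ipomset Λ, P.Interval → ∀ l : List (Ipomset Λ), IsSparseDecomp l P →
        ∀ x ∈ P.E, ∀ y ∈ P.E,
          (MSO.Sat P φ (fun n => if n = 0 then x else y) (fun _ => ∅) ↔
            bow (selIdx P l f x) (selIdx P l g y))) ∧
    (∃ φmin : MSO Λ, φmin.fv1 ⊆ {0} ∧ φmin.fv2 = ∅ ∧
      ∀ P : Ipomset Λ, P.Interval → ∀ l : List (Ipomset Λ), IsSparseDecomp l P →
        ∀ x ∈ P.E,
          (MSO.Sat P φmin (fun _ => x) (fun _ => ∅) ↔ selIdx P l f x = 1)) ∧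
    (∃ φmax : MSO Λ, φmax.fv1 ⊆ {0} ∧ φmax.fv2 = ∅ ∧
      ∀ P : Ipomset Λ, P.Interval → ∀ l : List (Ipomset Λ), IsSparseDecomp l P →
        ∀ x ∈ P.E,
          (MSO.Sat P φmax (fun _ => x) (fun _ => ∅) ↔
            selIdx P l f x = (l.length : EReal))) := by
  refine ⟨?_, ⟨.idxFirst f 0 2, MSO.fv1_idxFirst, MSO.fv2_idxFirst,
      fun P _ l hl x hx => MSO.sat_idxFirst_iff hl hx (by decide)⟩,
    ⟨.idxLast f 0 2, MSO.fv1_idxLast, MSO.fv2_idxLast,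
      fun P _ l hl x hx => MSO.sat_idxLast_iff hl hx (by decide)⟩⟩
  rcases hbow with rfl | rfl | rfl
  · exact ⟨.idxEq f g 0 1 2, MSO.fv1_idxEq, MSO.fv2_idxEq,
      fun P _ l hl x hx y hy => MSO.sat_idxEq_iff hl hx hy (by decide) (by decide)⟩
  · exact ⟨.idxLt f g 0 1 2, MSO.fv1_idxLt, MSO.fv2_idxLt,
      fun P _ l hl x hx y hy => MSO.sat_idxLt_iff hl hx hy (by decide) (by decide)⟩
  · exact ⟨.idxLt g f 1 0 2, Finset.pair_comm 0 1 ▸ MSO.fv1_idxLt, MSO.fv2_idxLt,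
      fun P _ l hl x hx y hy => MSO.sat_idxLt_iff hl hy hx (by decide) (by decide)⟩

/-- For `f, g ∈ {St, Te}` (encoded by a Boolean, `true = St`) and
`⋈ ∈ {=, <, >}`, the relation `f(x) ⋈ g(y)` on events of an interval ipomset (indices
taken in its sparse step decomposition) is MSO-definable, as are `f(x) = 1` (min) and
`f(x) = n` (max). -/
theorem st_te_comparisons_mso_definable {Λ : Type} [Fintype Λ] (f g : Bool)
    (bow : EReal → EReal → Prop)
    (hbow : bow = (· = ·) ∨ bow = (· < ·) ∨ bow = (· > ·)) :
    (∃ φ : MSO Λ, φ.fv1 ⊆ {0, 1} ∧ φ.fv2 = ∅ ∧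
      ∀ P : Ipomset Λ, P.Interval → ∀ l : List (Ipomset Λ), IsSparseDecomp l P →
        ∀ x ∈ P.E, ∀ y ∈ P.E,
          (MSO.Sat P φ (fun n => if n = 0 then x else y) (fun _ => ∅) ↔
            bow (selIdx P l f x) (selIdx P l g y))) ∧
    (∃ φmin : MSO Λ, φmin.fv1 ⊆ {0} ∧ φmin.fv2 = ∅ ∧
      ∀ P : Ipomset Λ, P.Interval → ∀ l : List (Ipomset Λ), IsSparseDecomp l P →
        ∀ x ∈ P.E,
          (MSO.Sat P φmin (fun _ => x) (fun _ => ∅) ↔ selIdx P l f x = 1)) ∧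
    (∃ φmax : MSO Λ, φmax.fv1 ⊆ {0} ∧ φmax.fv2 = ∅ ∧
      ∀ P : Ipomset Λ, P.Interval → ∀ l : List (Ipomset Λ), IsSparseDecomp l P →
        ∀ x ∈ P.E,
          (MSO.Sat P φmax (fun _ => x) (fun _ => ∅) ↔
            selIdx P l f x = (l.length : EReal))) :=
  st_te_comparisons_mso_definable_general f g bow hbow
end
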